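/- arXiv:1309.3696 — 5 statements merged into one kernel-verified Lean document; each statement's English description precedes it below -/
import Mathlib

section
/- Let S = R ∪ B be a two-colored finite point set in ℝ². Let OPT₁ be the maximum size of a subfamily of R₁ consisting of pairwise-disjoint rectangles, and let M be the maximum size of an independent set of the graph G_{p,c}(R₁). Then OPT₁ ≤ M ≤ 2·OPT₁. -/
open Set

/-- Points of the plane. -/
abbrev Pt : Type := ℝ × ℝ

/-- `D a b` is the closed axis-aligned rectangle having the segment from `a` to `b`
as a diagonal, i.e. the minimum enclosing axis-aligned rectangle of `a` and `b`. -/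
def D (a b : Pt) : Set Pt :=
  Set.Icc (min a.1 b.1) (max a.1 b.1) ×ˢ Set.Icc (min a.2 b.2) (max a.2 b.2)

/-- `Pierces R₂ R₁` : the projection of `R₁` onto the x-axis contains that of `R₂`,
and the projection of `R₂` onto the y-axis contains that of `R₁`. -/
def Pierces (R₂ R₁ : Set Pt) : Prop :=
  Prod.fst '' R₂ ⊆ Prod.fst '' R₁ ∧ Prod.snd '' R₁ ⊆ Prod.snd '' R₂

/-- Two rectangles have a piercing intersection if one of them pierces the other. -/
def PiercingInter (A B : Set Pt) : Prop := Pierces A B ∨ Pierces B A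

/-- The four corner points of an axis-aligned rectangle given as a set. -/
def corners (A : Set Pt) : Set Pt :=
  {c | (c.1 = sInf (Prod.fst '' A) ∨ c.1 = sSup (Prod.fst '' A)) ∧
       (c.2 = sInf (Prod.snd '' A) ∨ c.2 = sSup (Prod.snd '' A))}

/-- `A` and `B` have a corner intersection (w.r.t. the point set `P`):
each rectangle contains exactly one of the corner points of the other,
and these two contained corners are not elements of `P`. -/
def CornerInter (P : Set Pt) (A B : Set Pt) : Prop :=
  (∃! c, c ∈ corners B ∧ c ∈ A) ∧ (∃! c, c ∈ corners A ∧ c ∈ B) ∧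
  ∀ c, ((c ∈ corners B ∧ c ∈ A) ∨ (c ∈ corners A ∧ c ∈ B)) → c ∉ P

/-- `A` and `B` have a point intersection: their intersection is precisely
a single point of `P`. -/
def PointInter (P : Set Pt) (A B : Set Pt) : Prop := ∃ s ∈ P, A ∩ B = {s}

/-- `A` is a rectangle on the point set `P`. -/
def IsRectOn (P : Set Pt) (A : Set Pt) : Prop :=
  ∃ a b, a ∈ P ∧ b ∈ P ∧ a ≠ b ∧ A = D a b ∧ A ∩ P = {a, b}

/-- A complete set of rectangles on `P`: for every two elements `D a b`, `D a' b'`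
of `H` that have a corner intersection, the other two rectangles of the form
`D p q` (with `p ∈ {a,a'}`, `q ∈ {b,b'}`) having a piercing intersection with
each other also belong to `H`. -/
def CompleteOn (P : Set Pt) (H : Set (Set Pt)) : Prop :=
  (∀ A ∈ H, IsRectOn P A) ∧
  ∀ a b a' b' : Pt, a ∈ P → b ∈ P → a' ∈ P → b' ∈ P →
    D a b ∈ H → D a' b' ∈ H → CornerInter P (D a b) (D a' b') →
    PiercingInter (D a b') (D a' b) →
    D a b' ∈ H ∧ D a' b ∈ H

/-- Adjacency in the graph `G_{p,c}(H)` : a piercing or a corner intersection. -/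
def AdjPC (P : Set Pt) (A B : Set Pt) : Prop := PiercingInter A B ∨ CornerInter P A B

/-- `I` is an independent set of the graph `G_{p,c}(H)`. -/
def IndepPC (P : Set Pt) (H I : Set (Set Pt)) : Prop :=
  I ⊆ H ∧ I.Pairwise fun A B => ¬ AdjPC P A B

/-- The maximum size of an independent set of the graph `G_{p,c}(H)`. -/
noncomputable def maxIndepPC (P : Set Pt) (H : Set (Set Pt)) : ℕ :=
  sSup {n | ∃ I, IndepPC P H I ∧ I.ncard = n}

/-- The family `𝓡(S)` of monochromatic rectangles of the two-colored point set
`S = R ∪ B`: rectangles `D p q` with `p,q` distinct points of the same color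
containing no point of `S` other than `p` and `q`. -/
def RS (R B : Set Pt) : Set (Set Pt) :=
  {A | ∃ p q, ((p ∈ R ∧ q ∈ R) ∨ (p ∈ B ∧ q ∈ B)) ∧ p ≠ q ∧ A = D p q ∧
    A ∩ (R ∪ B) = {p, q}}

/-- The blue rectangles of `𝓡(S)` having a point of `S` at their bottom-left corner. -/
def Fam1Blue (R B : Set Pt) : Set (Set Pt) :=
  {A | ∃ p q, p ∈ B ∧ q ∈ B ∧ p ≠ q ∧ A = D p q ∧ A ∩ (R ∪ B) = {p, q} ∧
    (min p.1 q.1, min p.2 q.2) ∈ R ∪ B}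

/-- The red rectangles of `𝓡(S)` having a point of `S` at their bottom-right corner. -/
def Fam1Red (R B : Set Pt) : Set (Set Pt) :=
  {A | ∃ p q, p ∈ R ∧ q ∈ R ∧ p ≠ q ∧ A = D p q ∧ A ∩ (R ∪ B) = {p, q} ∧
    (max p.1 q.1, min p.2 q.2) ∈ R ∪ B}

/-- The family `𝓡₁`. -/
def Fam1 (R B : Set Pt) : Set (Set Pt) := Fam1Blue R B ∪ Fam1Red R B

/-- The family `𝓡₂`: blue rectangles with a point of `S` at the bottom-right corner
together with red rectangles with a point of `S` at the bottom-left corner. -/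
def Fam2 (R B : Set Pt) : Set (Set Pt) :=
  {A | ∃ p q, p ∈ B ∧ q ∈ B ∧ p ≠ q ∧ A = D p q ∧ A ∩ (R ∪ B) = {p, q} ∧
    (max p.1 q.1, min p.2 q.2) ∈ R ∪ B} ∪
  {A | ∃ p q, p ∈ R ∧ q ∈ R ∧ p ≠ q ∧ A = D p q ∧ A ∩ (R ∪ B) = {p, q} ∧
    (min p.1 q.1, min p.2 q.2) ∈ R ∪ B}

/-- The maximum size of a subfamily of `H` consisting of pairwise-disjoint rectangles. -/
noncomputable def maxDisjoint (H : Set (Set Pt)) : ℕ :=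
  sSup {n | ∃ I ⊆ H, I.Pairwise (fun A B => A ∩ B = ∅) ∧ I.ncard = n}

/-!
An edge of `G_{p,c}(𝓡₁)` joins two intersecting rectangles, so a pairwise-disjoint subfamily is
independent. For the converse, order `ℝ × ℝ` componentwise: a blue rectangle of `𝓡₁` is an
interval `Icc p q` meeting `S` only in `p` and `q`, and so is a red one after reflection in the
x-axis. Two such intervals of the same colour that meet without a piercing or a corner
intersection touch end to end (`q = p'` or `q' = p`), and a blue and a red rectangle that meet
must pierce, since neither contains a defining point of the other. So, within one colour of an
independent family, the members meeting a member `Icc p q` with maximal end `q` all start at `q`,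
and there is at most one of them: keeping `Icc p q`, dropping that neighbour and recursing leaves a
pairwise-disjoint subfamily of at least half the size.
-/

lemma D_eq_Icc_inf_sup (p q : Pt) : D p q = Icc (p ⊓ q) (p ⊔ q) := by
  rw [D, Icc_prod_Icc]
  rfl

lemma D_eq_Icc {p q : Pt} (h : p ≤ q) : D p q = Icc p q := by
  rw [D_eq_Icc_inf_sup, inf_eq_left.2 h, sup_eq_right.2 h]

lemma D_comm (p q : Pt) : D p q = D q p := by
  rw [D_eq_Icc_inf_sup, D_eq_Icc_inf_sup, inf_comm, sup_comm]

lemma pierces_prod_iff {s₁ t₁ s₂ t₂ : Set ℝ} (hs₁ : s₁.Nonempty) (ht₁ : t₁.Nonempty)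
    (hs₂ : s₂.Nonempty) (ht₂ : t₂.Nonempty) :
    Pierces (s₁ ×ˢ t₁) (s₂ ×ˢ t₂) ↔ s₁ ⊆ s₂ ∧ t₂ ⊆ t₁ := by
  rw [Pierces, fst_image_prod _ ht₁, fst_image_prod _ ht₂, snd_image_prod hs₁, snd_image_prod hs₂]

lemma pierces_Icc_iff {p q p' q' : Pt} (h : p ≤ q) (h' : p' ≤ q') :
    Pierces (Icc p q) (Icc p' q') ↔ (p'.1 ≤ p.1 ∧ q.1 ≤ q'.1) ∧ (p.2 ≤ p'.2 ∧ q'.2 ≤ q.2) := by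
  simp only [Icc_prod_eq, pierces_prod_iff (nonempty_Icc.2 h.1) (nonempty_Icc.2 h.2)
    (nonempty_Icc.2 h'.1) (nonempty_Icc.2 h'.2), Icc_subset_Icc_iff h.1, Icc_subset_Icc_iff h'.2]

lemma corners_Icc {p q : Pt} (h : p ≤ q) :
    corners (Icc p q) = {c | (c.1 = p.1 ∨ c.1 = q.1) ∧ (c.2 = p.2 ∨ c.2 = q.2)} := by
  rw [corners, Icc_prod_eq, fst_image_prod _ (nonempty_Icc.2 h.2),
    snd_image_prod (nonempty_Icc.2 h.1), csInf_Icc h.1, csSup_Icc h.1, csInf_Icc h.2,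
    csSup_Icc h.2]

lemma corners_Icc_subset {p q : Pt} (h : p ≤ q) : corners (Icc p q) ⊆ Icc p q := by
  rw [corners_Icc h]
  rintro c ⟨h₁ | h₁, h₂ | h₂⟩ <;>
    exact ⟨⟨by linarith [h.1], by linarith [h.2]⟩, by linarith [h.1], by linarith [h.2]⟩

lemma nonempty_inter_of_pierces {p q p' q' : Pt} (h : p ≤ q) (h' : p' ≤ q')
    (hp : Pierces (Icc p q) (Icc p' q')) : (Icc p q ∩ Icc p' q').Nonempty := by
  rw [pierces_Icc_iff h h'] at hp
  exact ⟨(p.1, p'.2), ⟨⟨le_rfl, hp.2.1⟩, h.1, h'.2.trans hp.2.2⟩,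
    ⟨hp.1.1, le_rfl⟩, h.1.trans hp.1.2, h'.2⟩

lemma nonempty_inter_of_adjPC {P : Set Pt} {p q p' q' : Pt} (h : p ≤ q) (h' : p' ≤ q')
    (hadj : AdjPC P (Icc p q) (Icc p' q')) : (Icc p q ∩ Icc p' q').Nonempty := by
  rcases hadj with (hp | hp) | hc
  · exact nonempty_inter_of_pierces h h' hp
  · rw [inter_comm]
    exact nonempty_inter_of_pierces h' h hp
  · obtain ⟨c, ⟨hcB, hcA⟩, -⟩ := hc.1
    exact ⟨c, hcA, corners_Icc_subset h' hcB⟩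

/-- `Icc p q` in the product order is the rectangle with bottom-left corner `p` and top-right
corner `q`. -/
def IsEmptyBox (S : Set Pt) (p q : Pt) : Prop := p < q ∧ Icc p q ∩ S = {p, q}

lemma IsEmptyBox.eq_or_eq {S : Set Pt} {p q z : Pt} (h : IsEmptyBox S p q) (hz : z ∈ Icc p q)
    (hzS : z ∈ S) : z = p ∨ z = q := by
  have hz' : z ∈ Icc p q ∩ S := ⟨hz, hzS⟩
  rwa [h.2] at hz'

lemma IsEmptyBox.left_mem {S : Set Pt} {p q : Pt} (h : IsEmptyBox S p q) : p ∈ S :=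
  (h.2.symm ▸ mem_insert p {q} : p ∈ Icc p q ∩ S).2

lemma IsEmptyBox.right_mem {S : Set Pt} {p q : Pt} (h : IsEmptyBox S p q) : q ∈ S :=
  (h.2.symm ▸ mem_insert_of_mem p rfl : q ∈ Icc p q ∩ S).2

lemma CornerInter.symm {P A B : Set Pt} (h : CornerInter P A B) : CornerInter P B A :=
  ⟨h.2.1, h.1, fun c hc => h.2.2 c hc.symm⟩

lemma cornerInter_Icc {S : Set Pt} {p q p' q' : Pt} (h : IsEmptyBox S p q)
    (h' : IsEmptyBox S p' q') (h₁ : p.1 < p'.1) (h₂ : p'.1 ≤ q.1) (h₃ : q.1 < q'.1)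
    (h₄ : p'.2 < p.2) (h₅ : p.2 ≤ q'.2) (h₆ : q'.2 < q.2) :
    CornerInter S (Icc p q) (Icc p' q') := by
  have hpq := h.1.le
  have hpq' := h'.1.le
  refine ⟨⟨(p'.1, q'.2), ?_, ?_⟩, ⟨(q.1, p.2), ?_, ?_⟩, ?_⟩
  · rw [corners_Icc hpq']
    exact ⟨⟨Or.inl rfl, Or.inr rfl⟩, ⟨by linarith, by linarith⟩, by linarith, by linarith⟩
  · rw [corners_Icc hpq']
    rintro c ⟨⟨hc₁ | hc₁, hc₂ | hc₂⟩, ⟨hl₁, hl₂⟩, hr₁, hr₂⟩ <;> ext <;> simp only at * <;> linarith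
  · rw [corners_Icc hpq]
    exact ⟨⟨Or.inr rfl, Or.inl rfl⟩, ⟨by linarith, by linarith⟩, by linarith, by linarith⟩
  · rw [corners_Icc hpq]
    rintro c ⟨⟨hc₁ | hc₁, hc₂ | hc₂⟩, ⟨hl₁, hl₂⟩, hr₁, hr₂⟩ <;> ext <;> simp only at * <;> linarith
  · rintro c (⟨hc, hcA⟩ | ⟨hc, hcA⟩) hcS
    · rw [corners_Icc hpq'] at hc
      rcases h.eq_or_eq hcA hcS with rfl | rfl <;> grind
    · rw [corners_Icc hpq] at hc
      rcases h'.eq_or_eq hcA hcS with rfl | rfl <;> grind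

lemma eq_or_incomparable {a b : Pt} (hab : a ≤ b → a = b) (hba : b ≤ a → a = b) :
    a = b ∨ (a.1 < b.1 ∧ b.2 < a.2) ∨ (b.1 < a.1 ∧ a.2 < b.2) := by
  rcases le_or_gt a.1 b.1 with h₁ | h₁ <;> rcases le_or_gt a.2 b.2 with h₂ | h₂
  · exact Or.inl (hab ⟨h₁, h₂⟩)
  · rcases h₁.eq_or_lt with h₁ | h₁
    · exact Or.inl (hba ⟨h₁.ge, h₂.le⟩)
    · exact Or.inr (Or.inl ⟨h₁, h₂⟩)
  · rcases h₂.eq_or_lt with h₂ | h₂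
    · exact Or.inl (hba ⟨h₁.le, h₂.ge⟩)
    · exact Or.inr (Or.inr ⟨h₁, h₂⟩)
  · exact Or.inl (hba ⟨h₁.le, h₂.le⟩)

lemma eq_or_eq_of_not_adjPC {S : Set Pt} {p q p' q' : Pt} (h : IsEmptyBox S p q)
    (h' : IsEmptyBox S p' q') (hne : Icc p q ≠ Icc p' q')
    (hint : (Icc p q ∩ Icc p' q').Nonempty) (hadj : ¬ AdjPC S (Icc p q) (Icc p' q')) :
    q = p' ∨ q' = p := by
  by_contra! hqp
  obtain ⟨w, hw, hw'⟩ := hint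
  have hpq' : p ≤ q' := hw.1.trans hw'.2
  have hp'q : p' ≤ q := hw'.1.trans hw.2
  have hp := eq_or_incomparable
    (fun hle => ((h.eq_or_eq ⟨hle, hp'q⟩ h'.left_mem).resolve_right hqp.1.symm).symm)
    (fun hle => (h'.eq_or_eq ⟨hle, hpq'⟩ h.left_mem).resolve_right hqp.2.symm)
  have hq := eq_or_incomparable
    (fun hle => (h'.eq_or_eq ⟨hp'q, hle⟩ h.right_mem).resolve_left hqp.1)
    (fun hle => ((h.eq_or_eq ⟨hpq', hle⟩ h'.right_mem).resolve_left hqp.2).symm)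
  -- Of the nine combinations one is `A = A'`, two are corner intersections, the rest piercings.
  rcases hp with rfl | ⟨hp₁, hp₂⟩ | ⟨hp₁, hp₂⟩ <;> rcases hq with rfl | ⟨hq₁, hq₂⟩ | ⟨hq₁, hq₂⟩
  all_goals first
    | exact hne rfl
    | exact hadj (.inl (.inl ((pierces_Icc_iff h.1.le h'.1.le).2
        ⟨⟨by linarith, by linarith⟩, by linarith, by linarith⟩)))
    | exact hadj (.inl (.inr ((pierces_Icc_iff h'.1.le h.1.le).2
        ⟨⟨by linarith, by linarith⟩, by linarith, by linarith⟩)))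
    | exact hadj (.inr (cornerInter_Icc h h' hp₁ hp'q.1 hq₁ hp₂ hpq'.2 hq₂))
    | exact hadj (.inr (cornerInter_Icc h' h hp₁ hpq'.1 hq₁ hp₂ hp'q.2 hq₂).symm)

/-- Reflection in the x-axis: it maps a red rectangle of `𝓡₁`, whose red points are its top-left
and bottom-right corners, to a box `Icc u v` of the product order. -/
def vflip (z : Pt) : Pt := (z.1, -z.2)

lemma vflip_involutive : Function.Involutive vflip := fun z => by simp [vflip]

lemma mem_image_vflip {s : Set Pt} {z : Pt} : z ∈ vflip '' s ↔ vflip z ∈ s := by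
  rw [vflip_involutive.image_eq_preimage_symm, mem_preimage]

lemma image_vflip_image_vflip (s : Set Pt) : vflip '' (vflip '' s) = s := by
  ext z
  rw [mem_image_vflip, mem_image_vflip, vflip_involutive]

lemma image_vflip_Icc (u v : Pt) : vflip '' Icc u v = Icc u.1 v.1 ×ˢ Icc (-v.2) (-u.2) := by
  ext z
  simp only [mem_image_vflip, vflip, mem_Icc, mem_prod, Prod.le_def, le_neg, neg_le]
  tauto

lemma image_vflip_D (p q : Pt) : vflip '' D p q = D (vflip p) (vflip q) := by
  ext z
  simp only [mem_image_vflip, D, vflip, mem_prod, mem_Icc, min_neg_neg, max_neg_neg,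
    le_neg, neg_le]
  tauto

lemma fst_image_vflip (A : Set Pt) : Prod.fst '' (vflip '' A) = Prod.fst '' A := by
  rw [image_image]
  rfl

lemma snd_image_vflip (A : Set Pt) : Prod.snd '' (vflip '' A) = -(Prod.snd '' A) := by
  rw [image_image, ← image_neg_eq_neg, image_image]
  rfl

lemma Pierces.image_vflip {A B : Set Pt} (h : Pierces A B) :
    Pierces (vflip '' A) (vflip '' B) := by
  rwa [Pierces, fst_image_vflip, fst_image_vflip, snd_image_vflip, snd_image_vflip,
    neg_subset_neg]

lemma corners_image_vflip (A : Set Pt) : corners (vflip '' A) = vflip '' corners A := by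
  ext c
  simp only [mem_image_vflip, corners, mem_ofPred_eq, fst_image_vflip, snd_image_vflip,
    Real.sInf_neg, Real.sSup_neg, vflip, neg_eq_iff_eq_neg]
  rw [or_comm (a := c.2 = _)]

lemma existsUnique_vflip {p : Pt → Prop} (h : ∃! c, p c) : ∃! c, p (vflip c) := by
  obtain ⟨c, hc, hu⟩ := h
  refine ⟨vflip c, show p (vflip (vflip c)) by rwa [vflip_involutive c], fun d hd => ?_⟩
  rw [← hu _ hd, vflip_involutive]

lemma CornerInter.image_vflip {P A B : Set Pt} (h : CornerInter P A B) :
    CornerInter (vflip '' P) (vflip '' A) (vflip '' B) := by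
  simp only [CornerInter, corners_image_vflip, mem_image_vflip]
  exact ⟨existsUnique_vflip h.1, existsUnique_vflip h.2.1, fun c hc => h.2.2 _ hc⟩

lemma AdjPC.image_vflip {P A B : Set Pt} (h : AdjPC P A B) :
    AdjPC (vflip '' P) (vflip '' A) (vflip '' B) := by
  rcases h with (h | h) | h
  exacts [.inl (.inl h.image_vflip), .inl (.inr h.image_vflip), .inr h.image_vflip]

lemma eq_or_eq_of_not_adjPC_image_vflip {S : Set Pt} {u v u' v' : Pt}
    (h : IsEmptyBox (vflip '' S) u v) (h' : IsEmptyBox (vflip '' S) u' v')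
    (hne : vflip '' Icc u v ≠ vflip '' Icc u' v')
    (hint : (vflip '' Icc u v ∩ vflip '' Icc u' v').Nonempty)
    (hadj : ¬ AdjPC S (vflip '' Icc u v) (vflip '' Icc u' v')) : v = u' ∨ v' = u := by
  rw [← image_inter vflip_involutive.injective, image_nonempty] at hint
  refine eq_or_eq_of_not_adjPC h h' (fun e => hne (by rw [e])) hint fun hadj' => hadj ?_
  simpa only [image_vflip_image_vflip] using hadj'.image_vflip

lemma disjoint_Icc_image_vflip_of_not_adjPC {S : Set Pt} {p q u v : Pt} (h : IsEmptyBox S p q)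
    (h' : IsEmptyBox (vflip '' S) u v) (hcol : Disjoint ({p, q} : Set Pt) {vflip u, vflip v})
    (hadj : ¬ AdjPC S (Icc p q) (vflip '' Icc u v)) : Disjoint (Icc p q) (vflip '' Icc u v) := by
  have hS' : ∀ z ∈ S, z ∈ vflip '' Icc u v → z ∈ ({vflip u, vflip v} : Set Pt) := by
    intro z hz hz'
    rcases h'.eq_or_eq (mem_image_vflip.1 hz') (mem_image_of_mem vflip hz) with rfl | rfl <;>
      simp [vflip_involutive z]
  have hp : p ∉ vflip '' Icc u v := fun hm =>
    disjoint_left.1 hcol (mem_insert p {q}) (hS' p h.left_mem hm)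
  have hq : q ∉ vflip '' Icc u v := fun hm =>
    disjoint_left.1 hcol (mem_insert_of_mem p rfl) (hS' q h.right_mem hm)
  have hu : vflip u ∉ Icc p q := fun hm =>
    disjoint_right.1 hcol (mem_insert _ _) (h.eq_or_eq hm (mem_image_vflip.1 h'.left_mem))
  have hv : vflip v ∉ Icc p q := fun hm =>
    disjoint_right.1 hcol (mem_insert_of_mem _ rfl)
      (h.eq_or_eq hm (mem_image_vflip.1 h'.right_mem))
  rw [image_vflip_Icc, Icc_prod_eq] at *
  dsimp only [vflip] at hu hv
  by_contra hint
  obtain ⟨w, ⟨⟨hw₁, hw₂⟩, hw₃, hw₄⟩, ⟨hw₅, hw₆⟩, hw₇, hw₈⟩ :=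
    not_disjoint_iff_nonempty_inter.1 hint
  -- Since the rectangles share `w`, a defining point within the other's x-range escapes it
  -- vertically, on the side away from `w`.
  have hpy : u.1 ≤ p.1 → p.1 ≤ v.1 → p.2 < -v.2 := fun h₁ h₂ => by
    by_contra! h₃; exact hp ⟨⟨h₁, h₂⟩, h₃, by linarith⟩
  have hqy : u.1 ≤ q.1 → q.1 ≤ v.1 → -u.2 < q.2 := fun h₁ h₂ => by
    by_contra! h₃; exact hq ⟨⟨h₁, h₂⟩, by linarith, h₃⟩
  have huy : p.1 ≤ u.1 → u.1 ≤ q.1 → q.2 < -u.2 := fun h₁ h₂ => by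
    by_contra! h₃; exact hu ⟨⟨h₁, h₂⟩, by linarith, h₃⟩
  have hvy : p.1 ≤ v.1 → v.1 ≤ q.1 → -v.2 < p.2 := fun h₁ h₂ => by
    by_contra! h₃; exact hv ⟨⟨h₁, h₂⟩, h₃, by linarith⟩
  have hx := nonempty_Icc.2 h.1.le.1
  have hy := nonempty_Icc.2 h.1.le.2
  have hx' := nonempty_Icc.2 h'.1.le.1
  have hy' := nonempty_Icc.2 (neg_le_neg h'.1.le.2)
  rcases le_total u.1 p.1 with h₁ | h₁ <;> rcases le_total q.1 v.1 with h₂ | h₂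
  · refine hadj (.inl (.inl ((pierces_prod_iff hx hy hx' hy').2 ⟨Icc_subset_Icc h₁ h₂, ?_⟩)))
    exact Icc_subset_Icc (hpy h₁ (by linarith)).le (hqy (by linarith) h₂).le
  · linarith [hpy h₁ (by linarith), hvy (by linarith) h₂]
  · linarith [hqy (by linarith) h₂, huy h₁ (by linarith)]
  · refine hadj (.inl (.inr ((pierces_prod_iff hx' hy' hx hy).2 ⟨Icc_subset_Icc h₁ h₂, ?_⟩)))
    exact Icc_subset_Icc (hvy (by linarith) h₂).le (huy h₁ (by linarith)).le

section Halving

variable {X β : Type*} [PartialOrder β] {I : Set (Set X)} {f g : Set X → X} {ψ : X → β}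

lemma subsingleton_neighbors_of_maximalFor (hg : ∀ A ∈ I, g A ∈ A)
    (hfg : ∀ A ∈ I, ψ (f A) < ψ (g A))
    (hconf : I.Pairwise fun A C => (A ∩ C).Nonempty → g A = f C ∨ g C = f A)
    {A : Set X} (hA : MaximalFor (· ∈ I) (ψ ∘ g) A) :
    {C ∈ I | C ≠ A ∧ (A ∩ C).Nonempty}.Subsingleton := by
  have hhead : ∀ C ∈ I, C ≠ A → (A ∩ C).Nonempty → g C = f A := fun C hC hne hAC =>
    (hconf hA.1 hC hne.symm hAC).resolve_left fun e => by
      have h := hfg C hC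
      rw [← e] at h
      exact (hA.2 hC h.le).not_gt h
  rintro C₁ ⟨h₁, hne₁, hA₁⟩ C₂ ⟨h₂, hne₂, hA₂⟩
  by_contra hne
  have e₁ := hhead C₁ h₁ hne₁ hA₁
  have e₂ := hhead C₂ h₂ hne₂ hA₂
  rcases hconf h₁ h₂ hne ⟨f A, e₁ ▸ hg C₁ h₁, e₂ ▸ hg C₂ h₂⟩ with e | e
  · exact (hfg C₂ h₂).ne (by rw [← e, e₁, e₂])
  · exact (hfg C₁ h₁).ne (by rw [← e, e₁, e₂])

theorem exists_pairwise_disjoint_two_mul_ncard_le (hI : I.Finite) (hg : ∀ A ∈ I, g A ∈ A)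
    (hfg : ∀ A ∈ I, ψ (f A) < ψ (g A))
    (hconf : I.Pairwise fun A C => (A ∩ C).Nonempty → g A = f C ∨ g C = f A) :
    ∃ J ⊆ I, J.Pairwise Disjoint ∧ I.ncard ≤ 2 * J.ncard := by
  obtain ⟨n, hn⟩ : ∃ n, I.ncard = n := ⟨_, rfl⟩
  induction n using Nat.strong_induction_on generalizing I with
  | _ n ih =>
  rcases I.eq_empty_or_nonempty with rfl | hne
  · exact ⟨∅, empty_subset _, pairwise_empty _, by simp⟩
  -- A member `A` with `ψ (g A)` maximal meets at most one other member; keep `A`, discard that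
  -- neighbour and recurse.
  obtain ⟨A, hA⟩ := hI.exists_maximalFor (ψ ∘ g) I hne
  set N := {C ∈ I | C ≠ A ∧ (A ∩ C).Nonempty}
  have hN := subsingleton_neighbors_of_maximalFor hg hfg hconf hA
  have hAN : insert A N ⊆ I := insert_subset hA.1 fun C hC => hC.1
  have hI' : I \ insert A N ⊆ I := sdiff_subset
  have hlt : (I \ insert A N).ncard < n :=
    hn ▸ ncard_lt_ncard (sdiff_ssubset_left_iff.2 ⟨A, hA.1, mem_insert A N⟩) hI
  obtain ⟨J, hJ, hJd, hJc⟩ := ih _ hlt (hI.subset hI') (fun C hC => hg C (hI' hC))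
    (fun C hC => hfg C (hI' hC)) (hconf.mono hI') rfl
  have hAJ : A ∉ J := fun h => (hJ h).2 (mem_insert A N)
  refine ⟨insert A J, insert_subset hA.1 (hJ.trans hI'), hJd.insert fun C hC hAC => ?_, ?_⟩
  · have hCN : C ∉ N := fun h => (hJ hC).2 (mem_insert_of_mem A h)
    have hAC' : Disjoint A C := not_not.1 fun h =>
      hCN ⟨hI' (hJ hC), Ne.symm hAC, not_disjoint_iff_nonempty_inter.1 h⟩
    exact ⟨hAC', hAC'.symm⟩
  · have hsplit := ncard_sdiff_add_ncard_of_subset hAN hI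
    have hN1 : N.ncard ≤ 1 := (ncard_le_one hN.finite).2 fun _ h₁ _ h₂ => hN h₁ h₂
    have hAN2 : (insert A N).ncard ≤ 2 := (ncard_insert_le A N).trans (Nat.succ_le_succ hN1)
    rw [ncard_insert_of_notMem hAJ (hI.subset (hJ.trans hI'))]
    omega

end Halving

lemma exists_pairwise_disjoint_of_isEmptyBox {S : Set Pt} {I : Set (Set Pt)} (hI : I.Finite)
    (hbox : ∀ A ∈ I, ∃ p q, IsEmptyBox S p q ∧ Icc p q = A)
    (hind : I.Pairwise fun A C => ¬ AdjPC S A C) :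
    ∃ J ⊆ I, J.Pairwise Disjoint ∧ I.ncard ≤ 2 * J.ncard := by
  choose! f g hbox hfg using hbox
  refine exists_pairwise_disjoint_two_mul_ncard_le hI (f := f) (g := g) (ψ := id)
    (fun A hA => ?_) (fun A hA => (hbox A hA).1) fun A hA C hC hAC hint => ?_
  · have h := right_mem_Icc.2 (hbox A hA).1.le
    rwa [hfg A hA] at h
  · exact eq_or_eq_of_not_adjPC (hbox A hA) (hbox C hC) (by rwa [hfg A hA, hfg C hC])
      (by rwa [hfg A hA, hfg C hC]) (by rw [hfg A hA, hfg C hC]; exact hind hA hC hAC)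

lemma exists_pairwise_disjoint_of_isEmptyBox_image_vflip {S : Set Pt} {I : Set (Set Pt)}
    (hI : I.Finite) (hbox : ∀ A ∈ I, ∃ u v, IsEmptyBox (vflip '' S) u v ∧ vflip '' Icc u v = A)
    (hind : I.Pairwise fun A C => ¬ AdjPC S A C) :
    ∃ J ⊆ I, J.Pairwise Disjoint ∧ I.ncard ≤ 2 * J.ncard := by
  choose! f g hbox hfg using hbox
  refine exists_pairwise_disjoint_two_mul_ncard_le hI (f := vflip ∘ f) (g := vflip ∘ g)
    (ψ := vflip) (fun A hA => ?_) (fun A hA => ?_) fun A hA C hC hAC hint => ?_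
  · have h := mem_image_of_mem vflip (right_mem_Icc.2 (hbox A hA).1.le)
    rwa [hfg A hA] at h
  · simpa only [Function.comp, vflip_involutive _] using (hbox A hA).1
  · refine (eq_or_eq_of_not_adjPC_image_vflip (hbox A hA) (hbox C hC)
      (by rwa [hfg A hA, hfg C hC]) (by rwa [hfg A hA, hfg C hC]) ?_).imp
      (congrArg vflip) (congrArg vflip)
    rw [hfg A hA, hfg C hC]
    exact hind hA hC hAC

lemma exists_pairwise_disjoint_of_inter_sdiff {X : Type*} {I s : Set (Set X)} (hI : I.Finite)
    (h₁ : ∃ J ⊆ I ∩ s, J.Pairwise Disjoint ∧ (I ∩ s).ncard ≤ 2 * J.ncard)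
    (h₂ : ∃ J ⊆ I \ s, J.Pairwise Disjoint ∧ (I \ s).ncard ≤ 2 * J.ncard)
    (hcross : ∀ A ∈ I ∩ s, ∀ C ∈ I \ s, Disjoint A C) :
    ∃ J ⊆ I, J.Pairwise Disjoint ∧ I.ncard ≤ 2 * J.ncard := by
  obtain ⟨J₁, hJ₁, hd₁, hc₁⟩ := h₁
  obtain ⟨J₂, hJ₂, hd₂, hc₂⟩ := h₂
  refine ⟨J₁ ∪ J₂, union_subset (hJ₁.trans inter_subset_left) (hJ₂.trans sdiff_subset),
    pairwise_union_of_symm.2 ⟨hd₁, hd₂, fun A hA C hC _ => hcross A (hJ₁ hA) C (hJ₂ hC)⟩, ?_⟩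
  have hJ : Disjoint J₁ J₂ :=
    disjoint_left.2 fun A h₁ h₂ => (hJ₂ h₂).2 (hJ₁ h₁).2
  rw [ncard_union_eq hJ ((hI.inter_of_left s).subset hJ₁) (hI.sdiff.subset hJ₂),
    ← ncard_inter_add_ncard_sdiff_eq_ncard I s hI]
  omega

lemma le_or_le_of_inf_mem {S : Set Pt} {p q : Pt} (hS : D p q ∩ S = {p, q}) (h : p ⊓ q ∈ S) :
    p ≤ q ∨ q ≤ p := by
  have hmem : p ⊓ q ∈ D p q ∩ S := ⟨by rw [D_eq_Icc_inf_sup]; exact ⟨le_rfl, inf_le_sup⟩, h⟩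
  rw [hS] at hmem
  rcases hmem with e | e
  exacts [.inl (inf_eq_left.1 e), .inr (inf_eq_right.1 e)]

lemma le_or_le_of_sup_mem {S : Set Pt} {p q : Pt} (hS : D p q ∩ S = {p, q}) (h : p ⊔ q ∈ S) :
    p ≤ q ∨ q ≤ p := by
  have hmem : p ⊔ q ∈ D p q ∩ S := ⟨by rw [D_eq_Icc_inf_sup]; exact ⟨inf_le_sup, le_rfl⟩, h⟩
  rw [hS] at hmem
  rcases hmem with e | e
  exacts [.inr (sup_eq_left.1 e), .inl (sup_eq_right.1 e)]

lemma exists_isEmptyBox_of_le_or_le {C S : Set Pt} {p q : Pt} (hp : p ∈ C) (hq : q ∈ C)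
    (hpq : p ≠ q) (hS : D p q ∩ S = {p, q}) (hle : p ≤ q ∨ q ≤ p) :
    ∃ a b, a ∈ C ∧ b ∈ C ∧ IsEmptyBox S a b ∧ Icc a b = D p q := by
  rcases hle with hle | hle
  · rw [D_eq_Icc hle] at hS ⊢
    exact ⟨p, q, hp, hq, ⟨hle.lt_of_ne hpq, hS⟩, rfl⟩
  · rw [D_comm, D_eq_Icc hle, pair_comm] at hS
    rw [D_comm, D_eq_Icc hle]
    exact ⟨q, p, hq, hp, ⟨hle.lt_of_ne hpq.symm, hS⟩, rfl⟩

lemma exists_isEmptyBox_of_mem_fam1Blue {R B A : Set Pt} (hA : A ∈ Fam1Blue R B) :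
    ∃ p q, p ∈ B ∧ q ∈ B ∧ IsEmptyBox (R ∪ B) p q ∧ Icc p q = A := by
  obtain ⟨p, q, hp, hq, hpq, rfl, hS, hc⟩ := hA
  exact exists_isEmptyBox_of_le_or_le hp hq hpq hS (le_or_le_of_inf_mem hS hc)

lemma exists_isEmptyBox_image_vflip_of_mem_fam1Red {R B A : Set Pt} (hA : A ∈ Fam1Red R B) :
    ∃ u v, u ∈ vflip '' R ∧ v ∈ vflip '' R ∧ IsEmptyBox (vflip '' (R ∪ B)) u v ∧
      vflip '' Icc u v = A := by
  obtain ⟨p, q, hp, hq, hpq, rfl, hS, hc⟩ := hA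
  have hS' : D (vflip p) (vflip q) ∩ vflip '' (R ∪ B) = {vflip p, vflip q} := by
    rw [← image_vflip_D, ← image_inter vflip_involutive.injective, hS, image_pair]
  have hc' : vflip p ⊔ vflip q ∈ vflip '' (R ∪ B) := by
    rw [mem_image_vflip]
    simpa [vflip, max_neg_neg] using hc
  obtain ⟨u, v, hu, hv, hbox, huv⟩ := exists_isEmptyBox_of_le_or_le (mem_image_of_mem vflip hp)
    (mem_image_of_mem vflip hq) (vflip_involutive.injective.ne hpq) hS'
    (le_or_le_of_sup_mem hS' hc')
  refine ⟨u, v, hu, hv, hbox, ?_⟩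
  rw [huv, ← image_vflip_D, image_vflip_image_vflip]

lemma exists_eq_D_of_mem_fam1 {R B A : Set Pt} (hA : A ∈ Fam1 R B) :
    ∃ p ∈ R ∪ B, ∃ q ∈ R ∪ B, D p q = A := by
  rcases hA with ⟨p, q, hp, hq, -, rfl, -⟩ | ⟨p, q, hp, hq, -, rfl, -⟩
  exacts [⟨p, .inr hp, q, .inr hq, rfl⟩, ⟨p, .inl hp, q, .inl hq, rfl⟩]

lemma finite_fam1 {R B : Set Pt} (hfin : (R ∪ B).Finite) : (Fam1 R B).Finite := by
  refine ((hfin.prod hfin).image fun z => D z.1 z.2).subset fun A hA => ?_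
  obtain ⟨p, hp, q, hq, rfl⟩ := exists_eq_D_of_mem_fam1 hA
  exact ⟨(p, q), ⟨hp, hq⟩, rfl⟩

lemma indepPC_of_pairwise_disjoint {R B : Set Pt} {I : Set (Set Pt)} (hI : I ⊆ Fam1 R B)
    (hd : I.Pairwise fun A C => A ∩ C = ∅) : IndepPC (R ∪ B) (Fam1 R B) I := by
  refine ⟨hI, fun A hA C hC hAC hadj => ?_⟩
  have h := hd hA hC hAC
  obtain ⟨p, -, q, -, rfl⟩ := exists_eq_D_of_mem_fam1 (hI hA)
  obtain ⟨p', -, q', -, rfl⟩ := exists_eq_D_of_mem_fam1 (hI hC)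
  rw [D_eq_Icc_inf_sup, D_eq_Icc_inf_sup] at h hadj
  exact (nonempty_inter_of_adjPC inf_le_sup inf_le_sup hadj).ne_empty h

lemma exists_pairwise_disjoint_of_indepPC {R B : Set Pt} {I : Set (Set Pt)} (hdisj : R ∩ B = ∅)
    (hI : I.Finite) (hind : IndepPC (R ∪ B) (Fam1 R B) I) :
    ∃ J ⊆ I, J.Pairwise Disjoint ∧ I.ncard ≤ 2 * J.ncard := by
  obtain ⟨hIF, hind⟩ := hind
  have hblue (A) (hA : A ∈ I ∩ Fam1Blue R B) := exists_isEmptyBox_of_mem_fam1Blue hA.2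
  have hred (A) (hA : A ∈ I \ Fam1Blue R B) :=
    exists_isEmptyBox_image_vflip_of_mem_fam1Red ((hIF hA.1).resolve_left hA.2)
  refine exists_pairwise_disjoint_of_inter_sdiff (s := Fam1Blue R B) hI ?_ ?_ ?_
  · refine exists_pairwise_disjoint_of_isEmptyBox (hI.inter_of_left _) (fun A hA => ?_)
      (hind.mono inter_subset_left)
    obtain ⟨p, q, -, -, h⟩ := hblue A hA
    exact ⟨p, q, h⟩
  · refine exists_pairwise_disjoint_of_isEmptyBox_image_vflip hI.sdiff (fun A hA => ?_)
      (hind.mono sdiff_subset)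
    obtain ⟨u, v, -, -, h⟩ := hred A hA
    exact ⟨u, v, h⟩
  · intro A hA C hC
    have hadj := hind hA.1 hC.1 fun e => hC.2 (e ▸ hA.2)
    obtain ⟨p, q, hp, hq, hbox, rfl⟩ := hblue A hA
    obtain ⟨u, v, hu, hv, hbox', rfl⟩ := hred C hC
    refine disjoint_Icc_image_vflip_of_not_adjPC hbox hbox' ?_ hadj
    exact (disjoint_iff_inter_eq_empty.2 hdisj).symm.mono (pair_subset hp hq)
      (pair_subset (mem_image_vflip.1 hu) (mem_image_vflip.1 hv))

/-- For `OPT₁` the maximum size of a pairwise-disjoint subfamily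
of `𝓡₁` and `M` the maximum size of an independent set of `G_{p,c}(𝓡₁)`, we
have `OPT₁ ≤ M ≤ 2 · OPT₁`. -/
theorem stmt9 (R B : Set Pt) (hfin : (R ∪ B).Finite) (hdisj : R ∩ B = ∅) :
    maxDisjoint (Fam1 R B) ≤ maxIndepPC (R ∪ B) (Fam1 R B) ∧
    maxIndepPC (R ∪ B) (Fam1 R B) ≤ 2 * maxDisjoint (Fam1 R B) := by
  have hF := finite_fam1 hfin
  have hbddD : BddAbove {n | ∃ I ⊆ Fam1 R B, I.Pairwise (fun A C => A ∩ C = ∅) ∧ I.ncard = n} :=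
    ⟨_, by rintro _ ⟨I, hI, -, rfl⟩; exact ncard_le_ncard hI hF⟩
  have hbddI : BddAbove {n | ∃ I, IndepPC (R ∪ B) (Fam1 R B) I ∧ I.ncard = n} :=
    ⟨_, by rintro _ ⟨I, hI, rfl⟩; exact ncard_le_ncard hI.1 hF⟩
  constructor
  · refine csSup_le' ?_
    rintro _ ⟨I, hI, hd, rfl⟩
    exact le_csSup hbddI ⟨I, indepPC_of_pairwise_disjoint hI hd, rfl⟩
  · refine csSup_le' ?_
    rintro _ ⟨I, hI, rfl⟩
    obtain ⟨J, hJI, hJ, hcard⟩ := exists_pairwise_disjoint_of_indepPC hdisj (hF.subset hI.1) hI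
    have hJD : J.Pairwise fun A C => A ∩ C = ∅ :=
      hJ.mono' fun _ _ => disjoint_iff_inter_eq_empty.1
    exact hcard.trans (Nat.mul_le_mul_left 2 (le_csSup hbddD ⟨J, hJI.trans hI.1, hJD, rfl⟩))
end

section
/- Let S = R ∪ B be a two-colored finite point set in ℝ². Then the family R̄₁ is a complete set of rectangles on S: for every two elements D(a,b) and D(a',b') of R̄₁ that have a corner intersection, the other two rectangles of the form D(p,q) with p ∈ {a,a'} and q ∈ {b,b'} (which have a piercing intersection with each other) also belong to R̄₁. The same holds for the families R̄₂, R̄₃, and R̄₄. -/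
open Set

open Pointwise

/-- The family `𝓡̄(S)` of bichromatic rectangles of `S = R ∪ B`. -/
def biRS (R B : Set Pt) : Set (Set Pt) :=
  {A | ∃ p ∈ R, ∃ q ∈ B, A = D p q ∧ A ∩ (R ∪ B) = {p, q}}

/-- `𝓡̄₁`: the rectangles of `𝓡̄(S)` with a blue point at the bottom-left corner. -/
def biFam1 (R B : Set Pt) : Set (Set Pt) :=
  {A | ∃ p ∈ R, ∃ q ∈ B, A = D p q ∧ A ∩ (R ∪ B) = {p, q} ∧
    (min p.1 q.1, min p.2 q.2) ∈ B}

/-- `𝓡̄₂`: the rectangles of `𝓡̄(S)` with a red point at the bottom-left corner. -/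
def biFam2 (R B : Set Pt) : Set (Set Pt) :=
  {A | ∃ p ∈ R, ∃ q ∈ B, A = D p q ∧ A ∩ (R ∪ B) = {p, q} ∧
    (min p.1 q.1, min p.2 q.2) ∈ R}

/-- `𝓡̄₃`: the rectangles of `𝓡̄(S)` with a blue point at the bottom-right corner. -/
def biFam3 (R B : Set Pt) : Set (Set Pt) :=
  {A | ∃ p ∈ R, ∃ q ∈ B, A = D p q ∧ A ∩ (R ∪ B) = {p, q} ∧
    (max p.1 q.1, min p.2 q.2) ∈ B}

/-- `𝓡̄₄`: the rectangles of `𝓡̄(S)` with a red point at the bottom-right corner. -/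
def biFam4 (R B : Set Pt) : Set (Set Pt) :=
  {A | ∃ p ∈ R, ∃ q ∈ B, A = D p q ∧ A ∩ (R ∪ B) = {p, q} ∧
    (max p.1 q.1, min p.2 q.2) ∈ R}

lemma mem_D {p a b : Pt} : p ∈ D a b ↔
    (min a.1 b.1 ≤ p.1 ∧ p.1 ≤ max a.1 b.1) ∧ (min a.2 b.2 ≤ p.2 ∧ p.2 ≤ max a.2 b.2) := by
  rw [D, Set.mem_prod, Set.mem_Icc, Set.mem_Icc]

lemma D_comm_s12 (a b : Pt) : D a b = D b a := by
  simp [D, min_comm, max_comm]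

lemma left_mem_D (a b : Pt) : a ∈ D a b :=
  mem_D.2 ⟨⟨min_le_left _ _, le_max_left _ _⟩, min_le_left _ _, le_max_left _ _⟩

lemma right_mem_D (a b : Pt) : b ∈ D a b :=
  mem_D.2 ⟨⟨min_le_right _ _, le_max_right _ _⟩, min_le_right _ _, le_max_right _ _⟩

lemma bl_mem_D (a b : Pt) : ((min a.1 b.1, min a.2 b.2) : Pt) ∈ D a b :=
  mem_D.2 ⟨⟨le_refl _, min_le_max⟩, le_refl _, min_le_max⟩

lemma D_self (a : Pt) : D a a = {a} := by
  simp [D, Set.Icc_self]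

lemma mem_D_of_le {a b : Pt} (h1 : a.1 ≤ b.1) (h2 : a.2 ≤ b.2) {p : Pt} :
    p ∈ D a b ↔ (a.1 ≤ p.1 ∧ p.1 ≤ b.1) ∧ (a.2 ≤ p.2 ∧ p.2 ≤ b.2) := by
  rw [mem_D, min_eq_left h1, max_eq_right h1, min_eq_left h2, max_eq_right h2]

lemma fst_image_D (a b : Pt) : Prod.fst '' D a b = Icc (min a.1 b.1) (max a.1 b.1) :=
  Set.fst_image_prod _ (nonempty_Icc.2 min_le_max)

lemma snd_image_D (a b : Pt) : Prod.snd '' D a b = Icc (min a.2 b.2) (max a.2 b.2) :=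
  Set.snd_image_prod (nonempty_Icc.2 min_le_max) _

lemma mem_corners_D {c a b : Pt} : c ∈ corners (D a b) ↔
    (c.1 = min a.1 b.1 ∨ c.1 = max a.1 b.1) ∧ (c.2 = min a.2 b.2 ∨ c.2 = max a.2 b.2) := by
  have h1 : min a.1 b.1 ≤ max a.1 b.1 := min_le_max
  have h2 : min a.2 b.2 ≤ max a.2 b.2 := min_le_max
  simp [corners, fst_image_D, snd_image_D, csInf_Icc h1, csSup_Icc h1, csInf_Icc h2, csSup_Icc h2]

lemma left_mem_corners (a b : Pt) : a ∈ corners (D a b) := by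
  rw [mem_corners_D]
  constructor
  · rcases le_total a.1 b.1 with h | h
    · exact Or.inl (min_eq_left h).symm
    · exact Or.inr (max_eq_left h).symm
  · rcases le_total a.2 b.2 with h | h
    · exact Or.inl (min_eq_left h).symm
    · exact Or.inr (max_eq_left h).symm

lemma right_mem_corners (a b : Pt) : b ∈ corners (D a b) := by
  rw [D_comm_s12]; exact left_mem_corners b a

lemma overlap {S : Set Pt} {a b a' b' : Pt}
    (ha : a ∈ S) (hb : b ∈ S) (ha' : a' ∈ S) (hb' : b' ∈ S)
    (hab1 : a.1 ≤ b.1) (hab2 : a.2 ≤ b.2) (hab1' : a'.1 ≤ b'.1) (hab2' : a'.2 ≤ b'.2)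
    (Hc : ∃ c, (c ∈ corners (D a' b') ∧ c ∈ D a b) ∧ c ∉ S)
    (Hno : ∀ c, (c ∈ corners (D a' b') ∧ c ∈ D a b) ∨ (c ∈ corners (D a b) ∧ c ∈ D a' b') → c ∉ S) :
    (a.1 < a'.1 ∧ a'.1 ≤ b.1 ∧ b.1 < b'.1 ∧ a'.2 < a.2 ∧ a.2 ≤ b'.2 ∧ b'.2 < b.2) ∨
    (a'.1 < a.1 ∧ a.1 ≤ b'.1 ∧ b'.1 < b.1 ∧ a.2 < a'.2 ∧ a'.2 ≤ b.2 ∧ b.2 < b'.2) := by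
  have hna' : a' ∉ D a b := fun h => Hno a' (Or.inl ⟨left_mem_corners _ _, h⟩) ha'
  have hnb' : b' ∉ D a b := fun h => Hno b' (Or.inl ⟨right_mem_corners _ _, h⟩) hb'
  have hna : a ∉ D a' b' := fun h => Hno a (Or.inr ⟨left_mem_corners _ _, h⟩) ha
  have hnb : b ∉ D a' b' := fun h => Hno b (Or.inr ⟨right_mem_corners _ _, h⟩) hb
  obtain ⟨c, ⟨hcc, hcm⟩, hcS⟩ := Hc
  rw [mem_corners_D, min_eq_left hab1', max_eq_right hab1',
      min_eq_left hab2', max_eq_right hab2'] at hcc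
  rw [mem_D_of_le hab1 hab2] at hcm
  rw [mem_D_of_le hab1 hab2] at hna' hnb'
  rw [mem_D_of_le hab1' hab2'] at hna hnb
  obtain ⟨h1 | h1, h2 | h2⟩ := hcc
  · -- c = a'
    exfalso
    have : c = a' := Prod.ext h1 h2
    rw [this] at hcS; exact hcS ha'
  · -- c = (a'.1, b'.2) : configuration 1
    have k1 : a.1 ≤ a'.1 := h1 ▸ hcm.1.1
    have k2 : a'.1 ≤ b.1 := h1 ▸ hcm.1.2
    have k3 : a.2 ≤ b'.2 := h2 ▸ hcm.2.1
    have k4 : b'.2 ≤ b.2 := h2 ▸ hcm.2.2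
    have k5 : a'.2 < a.2 := by
      by_contra h; push_neg at h
      exact hna' ⟨⟨k1, k2⟩, h, by linarith⟩
    have k6 : b.1 < b'.1 := by
      by_contra h; push_neg at h
      exact hnb' ⟨⟨by linarith, h⟩, k3, k4⟩
    have k7 : a.1 < a'.1 := by
      by_contra h; push_neg at h
      exact hna ⟨⟨h, by linarith⟩, by linarith, k3⟩
    have k8 : b'.2 < b.2 := by
      by_contra h; push_neg at h
      exact hnb ⟨⟨k2, by linarith⟩, by linarith, h⟩
    exact Or.inl ⟨k7, k2, k6, k5, k3, k8⟩
  · -- c = (b'.1, a'.2) : configuration 2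
    have k1 : a.1 ≤ b'.1 := h1 ▸ hcm.1.1
    have k2 : b'.1 ≤ b.1 := h1 ▸ hcm.1.2
    have k3 : a.2 ≤ a'.2 := h2 ▸ hcm.2.1
    have k4 : a'.2 ≤ b.2 := h2 ▸ hcm.2.2
    have m1 : a'.1 < a.1 := by
      by_contra h; push_neg at h
      exact hna' ⟨⟨h, by linarith⟩, k3, k4⟩
    have m2 : b.2 < b'.2 := by
      by_contra h; push_neg at h
      exact hnb' ⟨⟨k1, k2⟩, by linarith, h⟩
    have m3 : a.2 < a'.2 := by
      by_contra h; push_neg at h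
      exact hna ⟨⟨by linarith, k1⟩, h, by linarith⟩
    have m4 : b'.1 < b.1 := by
      by_contra h; push_neg at h
      exact hnb ⟨⟨by linarith, h⟩, k4, by linarith⟩
    exact Or.inr ⟨m1, k1, m4, m3, k4, m2⟩
  · -- c = b'
    exfalso
    have : c = b' := Prod.ext h1 h2
    rw [this] at hcS; exact hcS hb'

lemma core_cfg1 {S : Set Pt} {a b a' b' : Pt}
    (ha : a ∈ S) (hb : b ∈ S) (ha' : a' ∈ S) (hb' : b' ∈ S)
    (H1 : D a b ∩ S = {a, b}) (H2 : D a' b' ∩ S = {a', b'})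
    (h1 : a.1 < a'.1) (h2 : a'.1 ≤ b.1) (h3 : b.1 < b'.1)
    (h4 : a'.2 < a.2) (h5 : a.2 ≤ b'.2) (h6 : b'.2 < b.2) :
    D a b' ∩ S = {a, b'} ∧ D a' b ∩ S = {a', b} ∧
    min a.1 b'.1 = a.1 ∧ min a.2 b'.2 = a.2 ∧ min a'.1 b.1 = a'.1 ∧ min a'.2 b.2 = a'.2 := by
  have e1 : a.1 ≤ b'.1 := by linarith
  have e2 : a.2 ≤ b'.2 := h5
  have e3 : a'.1 ≤ b.1 := h2
  have e4 : a'.2 ≤ b.2 := by linarith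
  have hab1 : a.1 ≤ b.1 := by linarith
  have hab2 : a.2 ≤ b.2 := by linarith
  have hab1' : a'.1 ≤ b'.1 := by linarith
  have hab2' : a'.2 ≤ b'.2 := by linarith
  refine ⟨?_, ?_, min_eq_left e1, min_eq_left e2, min_eq_left e3, min_eq_left e4⟩
  · apply Set.Subset.antisymm
    · rintro x ⟨hx, hxS⟩
      rw [mem_D_of_le e1 e2] at hx
      by_cases hc : x.1 ≤ b.1
      · have hm : x ∈ D a b ∩ S :=
          ⟨(mem_D_of_le hab1 hab2).2 ⟨⟨hx.1.1, hc⟩, hx.2.1, by linarith [hx.2.2]⟩, hxS⟩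
        rw [H1] at hm
        rcases hm with rfl | rfl
        · exact Or.inl rfl
        · exfalso; linarith [hx.2.2]
      · push_neg at hc
        have hm : x ∈ D a' b' ∩ S :=
          ⟨(mem_D_of_le hab1' hab2').2 ⟨⟨by linarith, hx.1.2⟩, by linarith [hx.2.1], hx.2.2⟩, hxS⟩
        rw [H2] at hm
        rcases hm with rfl | rfl
        · exfalso; linarith [hx.2.1]
        · exact Or.inr rfl
    · rintro x (rfl | rfl)
      · exact ⟨(mem_D_of_le e1 e2).2 ⟨⟨le_refl _, e1⟩, le_refl _, e2⟩, ha⟩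
      · exact ⟨(mem_D_of_le e1 e2).2 ⟨⟨e1, le_refl _⟩, e2, le_refl _⟩, hb'⟩
  · apply Set.Subset.antisymm
    · rintro x ⟨hx, hxS⟩
      rw [mem_D_of_le e3 e4] at hx
      by_cases hc : x.2 ≤ b'.2
      · have hm : x ∈ D a' b' ∩ S :=
          ⟨(mem_D_of_le hab1' hab2').2 ⟨⟨hx.1.1, by linarith [hx.1.2]⟩, hx.2.1, hc⟩, hxS⟩
        rw [H2] at hm
        rcases hm with rfl | rfl
        · exact Or.inl rfl
        · exfalso; linarith [hx.1.2]
      · push_neg at hc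
        have hm : x ∈ D a b ∩ S :=
          ⟨(mem_D_of_le hab1 hab2).2 ⟨⟨by linarith [hx.1.1], hx.1.2⟩, by linarith, hx.2.2⟩, hxS⟩
        rw [H1] at hm
        rcases hm with rfl | rfl
        · exfalso; linarith
        · exact Or.inr rfl
    · rintro x (rfl | rfl)
      · exact ⟨(mem_D_of_le e3 e4).2 ⟨⟨le_refl _, e3⟩, le_refl _, e4⟩, ha'⟩
      · exact ⟨(mem_D_of_le e3 e4).2 ⟨⟨e3, le_refl _⟩, e4, le_refl _⟩, hb⟩

lemma core_matched {S : Set Pt} {a b a' b' : Pt}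
    (ha : a ∈ S) (hb : b ∈ S) (ha' : a' ∈ S) (hb' : b' ∈ S)
    (hab1 : a.1 ≤ b.1) (hab2 : a.2 ≤ b.2) (hab1' : a'.1 ≤ b'.1) (hab2' : a'.2 ≤ b'.2)
    (H1 : D a b ∩ S = {a, b}) (H2 : D a' b' ∩ S = {a', b'})
    (Hc : ∃ c, (c ∈ corners (D a' b') ∧ c ∈ D a b) ∧ c ∉ S)
    (Hno : ∀ c, (c ∈ corners (D a' b') ∧ c ∈ D a b) ∨ (c ∈ corners (D a b) ∧ c ∈ D a' b') → c ∉ S) :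
    D a b' ∩ S = {a, b'} ∧ D a' b ∩ S = {a', b} ∧
    min a.1 b'.1 = a.1 ∧ min a.2 b'.2 = a.2 ∧ min a'.1 b.1 = a'.1 ∧ min a'.2 b.2 = a'.2 := by
  rcases overlap ha hb ha' hb' hab1 hab2 hab1' hab2' Hc Hno with
    ⟨k1, k2, k3, k4, k5, k6⟩ | ⟨k1, k2, k3, k4, k5, k6⟩
  · exact core_cfg1 ha hb ha' hb' H1 H2 k1 k2 k3 k4 k5 k6
  · obtain ⟨c1, c2, c3, c4, c5, c6⟩ :=
      core_cfg1 ha' hb' ha hb H2 H1 k1 k2 k3 k4 k5 k6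
    exact ⟨c2, c1, c5, c6, c3, c4⟩

/-- From failure of x-projection containment both ways, piercing is impossible. -/
lemma no_pierce {a b a' b' : Pt} (u v u' v' : ℝ)
    (e1 : min a.1 b'.1 = u) (e2 : max a.1 b'.1 = v)
    (e3 : min a'.1 b.1 = u') (e4 : max a'.1 b.1 = v')
    (h1 : u < v) (h2 : u' < v') (h3 : ¬(u' ≤ u ∧ v ≤ v')) (h4 : ¬(u ≤ u' ∧ v' ≤ v)) :
    ¬ PiercingInter (D a b') (D a' b) := by
  rintro (⟨hs, -⟩ | ⟨hs, -⟩)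
  · rw [fst_image_D, fst_image_D, e1, e2, e3, e4] at hs
    have hu := hs (Set.left_mem_Icc.2 h1.le)
    have hv := hs (Set.right_mem_Icc.2 h1.le)
    rw [Set.mem_Icc] at hu hv
    exact h3 ⟨hu.1, hv.2⟩
  · rw [fst_image_D, fst_image_D, e1, e2, e3, e4] at hs
    have hu := hs (Set.left_mem_Icc.2 h2.le)
    have hv := hs (Set.right_mem_Icc.2 h2.le)
    rw [Set.mem_Icc] at hu hv
    exact h4 ⟨hu.1, hv.2⟩

lemma core {S : Set Pt} {a b a' b' : Pt}
    (ha : a ∈ S) (hb : b ∈ S) (ha' : a' ∈ S) (hb' : b' ∈ S)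
    (H1 : D a b ∩ S = {a, b}) (H2 : D a' b' ∩ S = {a', b'})
    (H3 : CornerInter S (D a b) (D a' b'))
    (H4 : PiercingInter (D a b') (D a' b))
    (H5 : ((min a.1 b.1, min a.2 b.2) : Pt) ∈ S)
    (H6 : ((min a'.1 b'.1, min a'.2 b'.2) : Pt) ∈ S) :
    D a b' ∩ S = {a, b'} ∧ D a' b ∩ S = {a', b} ∧
    ((((min a.1 b'.1, min a.2 b'.2) : Pt) = (min a.1 b.1, min a.2 b.2) ∧
      ((min a'.1 b.1, min a'.2 b.2) : Pt) = (min a'.1 b'.1, min a'.2 b'.2)) ∨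
     (((min a.1 b'.1, min a.2 b'.2) : Pt) = (min a'.1 b'.1, min a'.2 b'.2) ∧
      ((min a'.1 b.1, min a'.2 b.2) : Pt) = (min a.1 b.1, min a.2 b.2))) := by
  obtain ⟨ex1, ex2, Hno⟩ := H3
  have Hc1 : ∃ c, (c ∈ corners (D a' b') ∧ c ∈ D a b) ∧ c ∉ S := by
    obtain ⟨c, hc, -⟩ := ex1; exact ⟨c, hc, Hno c (Or.inl hc)⟩
  have Hc2 : ∃ c, (c ∈ corners (D a b) ∧ c ∈ D a' b') ∧ c ∉ S := by
    obtain ⟨c, hc, -⟩ := ex2; exact ⟨c, hc, Hno c (Or.inr hc)⟩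
  have hblA : ((min a.1 b.1, min a.2 b.2) : Pt) ∈ ({a, b} : Set Pt) := by
    rw [← H1]; exact ⟨bl_mem_D a b, H5⟩
  have hblB : ((min a'.1 b'.1, min a'.2 b'.2) : Pt) ∈ ({a', b'} : Set Pt) := by
    rw [← H2]; exact ⟨bl_mem_D a' b', H6⟩
  rcases hblA with hblA | hblA <;> rcases hblB with hblB | hblB
  · -- bl A = a, bl B = a' : matched
    have hab1 : a.1 ≤ b.1 := min_eq_left_iff.1 (congrArg Prod.fst hblA)
    have hab2 : a.2 ≤ b.2 := min_eq_left_iff.1 (congrArg Prod.snd hblA)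
    have hab1' : a'.1 ≤ b'.1 := min_eq_left_iff.1 (congrArg Prod.fst hblB)
    have hab2' : a'.2 ≤ b'.2 := min_eq_left_iff.1 (congrArg Prod.snd hblB)
    obtain ⟨c1, c2, c3, c4, c5, c6⟩ :=
      core_matched ha hb ha' hb' hab1 hab2 hab1' hab2' H1 H2 Hc1 Hno
    refine ⟨c1, c2, Or.inl ⟨?_, ?_⟩⟩
    · rw [hblA, Prod.ext_iff]; exact ⟨c3, c4⟩
    · rw [hblB, Prod.ext_iff]; exact ⟨c5, c6⟩
  · -- bl A = a, bl B = b' : mismatched, contradiction with piercing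
    exfalso
    have hab1 : a.1 ≤ b.1 := min_eq_left_iff.1 (congrArg Prod.fst hblA)
    have hab2 : a.2 ≤ b.2 := min_eq_left_iff.1 (congrArg Prod.snd hblA)
    have hab1' : b'.1 ≤ a'.1 := min_eq_right_iff.1 (congrArg Prod.fst hblB)
    have hab2' : b'.2 ≤ a'.2 := min_eq_right_iff.1 (congrArg Prod.snd hblB)
    have Hc1' : ∃ c, (c ∈ corners (D b' a') ∧ c ∈ D a b) ∧ c ∉ S := by
      rw [D_comm_s12 b' a']; exact Hc1
    have Hno' : ∀ c, (c ∈ corners (D b' a') ∧ c ∈ D a b) ∨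
        (c ∈ corners (D a b) ∧ c ∈ D b' a') → c ∉ S := by
      rw [D_comm_s12 b' a']; exact Hno
    rcases overlap ha hb hb' ha' hab1 hab2 hab1' hab2' Hc1' Hno' with
      ⟨k1, k2, k3, k4, k5, k6⟩ | ⟨k1, k2, k3, k4, k5, k6⟩
    · exact no_pierce (a:=a) (b:=b) (a':=a') (b':=b') a.1 b'.1 b.1 a'.1 (min_eq_left (by linarith)) (max_eq_right (by linarith))
        (min_eq_right (by linarith)) (max_eq_left (by linarith))
        (by linarith) (by linarith) (by push_neg; intro h; linarith) (by push_neg; intro h; linarith) H4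
    · exact no_pierce (a:=a) (b:=b) (a':=a') (b':=b') b'.1 a.1 a'.1 b.1 (min_eq_right (by linarith)) (max_eq_left (by linarith))
        (min_eq_left (by linarith)) (max_eq_right (by linarith))
        (by linarith) (by linarith) (by push_neg; intro h; linarith) (by push_neg; intro h; linarith) H4
  · -- bl A = b, bl B = a' : mismatched
    exfalso
    have hab1 : b.1 ≤ a.1 := min_eq_right_iff.1 (congrArg Prod.fst hblA)
    have hab2 : b.2 ≤ a.2 := min_eq_right_iff.1 (congrArg Prod.snd hblA)
    have hab1' : a'.1 ≤ b'.1 := min_eq_left_iff.1 (congrArg Prod.fst hblB)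
    have hab2' : a'.2 ≤ b'.2 := min_eq_left_iff.1 (congrArg Prod.snd hblB)
    have H1' : D b a ∩ S = {b, a} := by rw [D_comm_s12 b a, H1, Set.pair_comm]
    have Hc1' : ∃ c, (c ∈ corners (D a' b') ∧ c ∈ D b a) ∧ c ∉ S := by
      rw [D_comm_s12 b a]; exact Hc1
    have Hno' : ∀ c, (c ∈ corners (D a' b') ∧ c ∈ D b a) ∨
        (c ∈ corners (D b a) ∧ c ∈ D a' b') → c ∉ S := by
      rw [D_comm_s12 b a]; exact Hno
    rcases overlap hb ha ha' hb' hab1 hab2 hab1' hab2' Hc1' Hno' with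
      ⟨k1, k2, k3, k4, k5, k6⟩ | ⟨k1, k2, k3, k4, k5, k6⟩
    · exact no_pierce (a:=a) (b:=b) (a':=a') (b':=b') a.1 b'.1 b.1 a'.1 (min_eq_left (by linarith)) (max_eq_right (by linarith))
        (min_eq_right (by linarith)) (max_eq_left (by linarith))
        (by linarith) (by linarith) (by push_neg; intro h; linarith) (by push_neg; intro h; linarith) H4
    · exact no_pierce (a:=a) (b:=b) (a':=a') (b':=b') b'.1 a.1 a'.1 b.1 (min_eq_right (by linarith)) (max_eq_left (by linarith))
        (min_eq_left (by linarith)) (max_eq_right (by linarith))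
        (by linarith) (by linarith) (by push_neg; intro h; linarith) (by push_neg; intro h; linarith) H4
  · -- bl A = b, bl B = b' : matched, swapped roles
    have hab1 : b.1 ≤ a.1 := min_eq_right_iff.1 (congrArg Prod.fst hblA)
    have hab2 : b.2 ≤ a.2 := min_eq_right_iff.1 (congrArg Prod.snd hblA)
    have hab1' : b'.1 ≤ a'.1 := min_eq_right_iff.1 (congrArg Prod.fst hblB)
    have hab2' : b'.2 ≤ a'.2 := min_eq_right_iff.1 (congrArg Prod.snd hblB)
    have H1' : D b' a' ∩ S = {b', a'} := by rw [D_comm_s12 b' a', H2, Set.pair_comm]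
    have H2' : D b a ∩ S = {b, a} := by rw [D_comm_s12 b a, H1, Set.pair_comm]
    have Hc2' : ∃ c, (c ∈ corners (D b a) ∧ c ∈ D b' a') ∧ c ∉ S := by
      rw [D_comm_s12 b a, D_comm_s12 b' a']; exact Hc2
    have Hno' : ∀ c, (c ∈ corners (D b a) ∧ c ∈ D b' a') ∨
        (c ∈ corners (D b' a') ∧ c ∈ D b a) → c ∉ S := by
      rw [D_comm_s12 b a, D_comm_s12 b' a']
      intro c hc
      exact Hno c hc.symm
    obtain ⟨c1, c2, c3, c4, c5, c6⟩ :=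
      core_matched hb' ha' hb ha hab1' hab2' hab1 hab2 H1' H2' Hc2' Hno'
    refine ⟨?_, ?_, Or.inr ⟨?_, ?_⟩⟩
    · rw [D_comm_s12 a b', ← Set.pair_comm b' a]; exact c1
    · rw [D_comm_s12 a' b, ← Set.pair_comm b a']; exact c2
    · rw [hblB, Prod.ext_iff]
      exact ⟨by rw [min_comm a.1 b'.1]; exact c3, by rw [min_comm a.2 b'.2]; exact c4⟩
    · rw [hblA, Prod.ext_iff]
      exact ⟨by rw [min_comm a'.1 b.1]; exact c5, by rw [min_comm a'.2 b.2]; exact c6⟩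

lemma unpack1 {R B : Set Pt} (hdisj : R ∩ B = ∅) {a b : Pt}
    (ha : a ∈ R ∪ B) (hb : b ∈ R ∪ B) (hA : D a b ∈ biFam1 R B) :
    D a b ∩ (R ∪ B) = {a, b} ∧ ((min a.1 b.1, min a.2 b.2) : Pt) ∈ B ∧
    ((a ∈ R ∧ b ∈ B) ∨ (a ∈ B ∧ b ∈ R)) := by
  obtain ⟨p, hp, q, hq, hE, hI, hbl⟩ := hA
  have haM : a ∈ ({p, q} : Set Pt) := by rw [← hI]; exact ⟨left_mem_D a b, ha⟩
  have hbM : b ∈ ({p, q} : Set Pt) := by rw [← hI]; exact ⟨right_mem_D a b, hb⟩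
  have hpq : p ≠ q := by
    intro h
    have : p ∈ R ∩ B := ⟨hp, h ▸ hq⟩
    rw [hdisj] at this; exact this
  rcases haM with h1 | h1 <;> rcases hbM with h2 | h2
  · exfalso
    have hq' : q ∈ D a b := by rw [hE]; exact right_mem_D p q
    rw [h1, h2, D_self] at hq'
    exact hpq (Set.mem_singleton_iff.1 hq').symm
  · subst h1; subst h2
    exact ⟨hI, hbl, Or.inl ⟨hp, hq⟩⟩
  · subst h1; subst h2
    refine ⟨by rw [hI]; exact Set.pair_comm _ _, ?_, Or.inr ⟨hq, hp⟩⟩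
    rw [min_comm a.1, min_comm a.2]; exact hbl
  · exfalso
    have hp' : p ∈ D a b := by rw [hE]; exact left_mem_D p q
    rw [h1, h2, D_self] at hp'
    exact hpq (Set.mem_singleton_iff.1 hp')

lemma fam1_complete {R B : Set Pt} (hdisj : R ∩ B = ∅) :
    CompleteOn (R ∪ B) (biFam1 R B) := by
  have hdj : ∀ x : Pt, x ∈ R → x ∈ B → False := by
    intro x h1 h2
    have : x ∈ R ∩ B := ⟨h1, h2⟩
    rw [hdisj] at this; exact this
  constructor
  · rintro A ⟨p, hp, q, hq, hE, hI, -⟩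
    exact ⟨p, q, Or.inl hp, Or.inr hq, fun h => hdj p hp (h ▸ hq), hE, hI⟩
  · intro a b a' b' ha hb ha' hb' hA hB hCI hPI
    obtain ⟨hIA, hblA, hcolA⟩ := unpack1 hdisj ha hb hA
    obtain ⟨hIB, hblB, hcolB⟩ := unpack1 hdisj ha' hb' hB
    have hBS : B ⊆ R ∪ B := Set.subset_union_right
    obtain ⟨C1, C2, C3⟩ := core ha hb ha' hb' hIA hIB hCI hPI (hBS hblA) (hBS hblB)
    have Hno := hCI.2.2
    have hne1 : a ≠ a' := fun h =>
      Hno a' (Or.inl ⟨left_mem_corners a' b', by rw [← h]; exact left_mem_D a b⟩) (ha')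
    have hne2 : a ≠ b' := fun h =>
      Hno b' (Or.inl ⟨right_mem_corners a' b', by rw [← h]; exact left_mem_D a b⟩) (hb')
    have hne3 : b ≠ a' := fun h =>
      Hno a' (Or.inl ⟨left_mem_corners a' b', by rw [← h]; exact right_mem_D a b⟩) (ha')
    have hne4 : b ≠ b' := fun h =>
      Hno b' (Or.inl ⟨right_mem_corners a' b', by rw [← h]; exact right_mem_D a b⟩) (hb')
    have mA : ((min a.1 b.1, min a.2 b.2) : Pt) ∈ ({a, b} : Set Pt) := by
      rw [← hIA]; exact ⟨bl_mem_D a b, hBS hblA⟩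
    have mB : ((min a'.1 b'.1, min a'.2 b'.2) : Pt) ∈ ({a', b'} : Set Pt) := by
      rw [← hIB]; exact ⟨bl_mem_D a' b', hBS hblB⟩
    rcases C3 with ⟨e1, e2⟩ | ⟨e1, e2⟩
    · -- bl(D a b') = bl(D a b), bl(D a' b) = bl(D a' b')
      have m1 : ((min a.1 b'.1, min a.2 b'.2) : Pt) ∈ ({a, b'} : Set Pt) := by
        rw [← C1]; exact ⟨bl_mem_D a b', hBS (by rw [e1]; exact hblA)⟩
      rcases m1 with hm | hm
      · -- bl(D a b') = a
        have haB : a ∈ B := by rw [e1.symm.trans hm] at hblA; exact hblA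
        have hbR : b ∈ R := by
          rcases hcolA with ⟨haR, -⟩ | ⟨-, hbR⟩
          · exact absurd haB (fun h => hdj a haR h)
          · exact hbR
        have m2 : ((min a'.1 b.1, min a'.2 b.2) : Pt) ∈ ({a', b} : Set Pt) := by
          rw [← C2]; exact ⟨bl_mem_D a' b, hBS (by rw [e2]; exact hblB)⟩
        rcases m2 with hm2 | hm2
        · -- bl(D a' b) = a'
          have ha'B : a' ∈ B := by rw [e2.symm.trans hm2] at hblB; exact hblB
          have hb'R : b' ∈ R := by
            rcases hcolB with ⟨ha'R, -⟩ | ⟨-, hb'R⟩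
            · exact absurd ha'B (fun h => hdj a' ha'R h)
            · exact hb'R
          constructor
          · refine ⟨b', hb'R, a, haB, D_comm_s12 a b', ?_, ?_⟩
            · rw [C1]; exact Set.pair_comm a b'
            · rw [min_comm b'.1, min_comm b'.2, hm]; exact haB
          · refine ⟨b, hbR, a', ha'B, D_comm_s12 a' b, ?_, ?_⟩
            · rw [C2]; exact Set.pair_comm a' b
            · rw [min_comm b.1, min_comm b.2, hm2]; exact ha'B
        · -- bl(D a' b) = b : impossible colors
          exfalso
          have hbB : b ∈ B := by rw [e2.symm.trans hm2] at hblB; exact hblB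
          exact hdj b hbR hbB
      · -- bl(D a b') = b' : then bl(D a b) = b', contradicting crossing distinctness
        exfalso
        have : ((min a.1 b.1, min a.2 b.2) : Pt) = b' := e1.symm.trans hm
        rcases mA with h | h
        · exact hne2 (h.symm.trans this)
        · exact hne4 (h.symm.trans this)
    · -- bl(D a b') = bl(D a' b'), bl(D a' b) = bl(D a b)
      have m1 : ((min a.1 b'.1, min a.2 b'.2) : Pt) ∈ ({a, b'} : Set Pt) := by
        rw [← C1]; exact ⟨bl_mem_D a b', hBS (by rw [e1]; exact hblB)⟩
      rcases m1 with hm | hm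
      · exfalso
        have : ((min a'.1 b'.1, min a'.2 b'.2) : Pt) = a := e1.symm.trans hm
        rcases mB with h | h
        · exact hne1 (h.symm.trans this).symm
        · exact hne2 (h.symm.trans this).symm
      · have hb'B : b' ∈ B := by rw [e1.symm.trans hm] at hblB; exact hblB
        have ha'R : a' ∈ R := by
          rcases hcolB with ⟨h1, -⟩ | ⟨-, h2⟩
          · exact h1
          · exact absurd hb'B (fun h => hdj b' h2 h)
        have m2 : ((min a'.1 b.1, min a'.2 b.2) : Pt) ∈ ({a', b} : Set Pt) := by
          rw [← C2]; exact ⟨bl_mem_D a' b, hBS (by rw [e2]; exact hblA)⟩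
        rcases m2 with hm2 | hm2
        · exfalso
          have h3 : ((min a.1 b.1, min a.2 b.2) : Pt) = a' := e2.symm.trans hm2
          rcases mA with h | h
          · exact hne1 (h.symm.trans h3)
          · exact hne3 (h.symm.trans h3)
        · have hbB : b ∈ B := by rw [e2.symm.trans hm2] at hblA; exact hblA
          have haR : a ∈ R := by
            rcases hcolA with ⟨h1, -⟩ | ⟨-, h2⟩
            · exact h1
            · exact absurd hbB (fun h => hdj b h2 h)
          constructor
          · refine ⟨a, haR, b', hb'B, rfl, C1, ?_⟩
            rw [hm]; exact hb'B
          · refine ⟨a', ha'R, b, hbB, rfl, C2, ?_⟩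
            rw [hm2]; exact hbB

lemma biFam2_eq (R B : Set Pt) : biFam2 R B = biFam1 B R := by
  ext A
  constructor
  · rintro ⟨p, hp, q, hq, hE, hI, hbl⟩
    refine ⟨q, hq, p, hp, by rw [hE, D_comm_s12], ?_, ?_⟩
    · rw [Set.union_comm, hI]; exact Set.pair_comm _ _
    · rw [min_comm q.1, min_comm q.2]; exact hbl
  · rintro ⟨p, hp, q, hq, hE, hI, hbl⟩
    refine ⟨q, hq, p, hp, by rw [hE, D_comm_s12], ?_, ?_⟩
    · rw [Set.union_comm, hI]; exact Set.pair_comm _ _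
    · rw [min_comm q.1, min_comm q.2]; exact hbl

lemma biFam4_eq (R B : Set Pt) : biFam4 R B = biFam3 B R := by
  ext A
  constructor
  · rintro ⟨p, hp, q, hq, hE, hI, hbl⟩
    refine ⟨q, hq, p, hp, by rw [hE, D_comm_s12], ?_, ?_⟩
    · rw [Set.union_comm, hI]; exact Set.pair_comm _ _
    · rw [max_comm q.1, min_comm q.2]; exact hbl
  · rintro ⟨p, hp, q, hq, hE, hI, hbl⟩
    refine ⟨q, hq, p, hp, by rw [hE, D_comm_s12], ?_, ?_⟩
    · rw [Set.union_comm, hI]; exact Set.pair_comm _ _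
    · rw [max_comm q.1, min_comm q.2]; exact hbl

/-! ### Reflection in the `y`-axis -/

def ng (p : Pt) : Pt := (-p.1, p.2)

lemma ng_invol (p : Pt) : ng (ng p) = p := by simp [ng]

lemma ng_inj : Function.Injective ng := by
  intro x y h
  have h1 := congrArg Prod.fst h
  have h2 := congrArg Prod.snd h
  simp [ng] at h1 h2
  exact Prod.ext h1 h2

lemma mem_ng_image {x : Pt} {A : Set Pt} : x ∈ ng '' A ↔ ng x ∈ A := by
  constructor
  · rintro ⟨y, hy, rfl⟩; rwa [ng_invol]
  · intro h; exact ⟨ng x, h, ng_invol x⟩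

lemma D_ng (p q : Pt) : D (ng p) (ng q) = ng '' D p q := by
  ext x
  rw [mem_ng_image, mem_D, mem_D]
  show ((min (-p.1) (-q.1) ≤ x.1 ∧ x.1 ≤ max (-p.1) (-q.1)) ∧ _) ↔
    ((min p.1 q.1 ≤ -x.1 ∧ -x.1 ≤ max p.1 q.1) ∧ _)
  rw [min_neg_neg, max_neg_neg]
  constructor
  · rintro ⟨⟨u1, u2⟩, v⟩; exact ⟨⟨by linarith, by linarith⟩, v⟩
  · rintro ⟨⟨u1, u2⟩, v⟩; exact ⟨⟨by linarith, by linarith⟩, v⟩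

lemma sInf_negIm (s : Set ℝ) : sInf ((fun x : ℝ => -x) '' s) = -sSup s := by
  rw [Set.image_neg_eq_neg, Real.sInf_def, neg_neg]

lemma sSup_negIm (s : Set ℝ) : sSup ((fun x : ℝ => -x) '' s) = -sInf s := by
  rw [Set.image_neg_eq_neg, Real.sInf_def, neg_neg]

lemma fst_image_ng (A : Set Pt) : Prod.fst '' (ng '' A) = (fun x : ℝ => -x) '' (Prod.fst '' A) := by
  rw [Set.image_image, Set.image_image]; rfl

lemma snd_image_ng (A : Set Pt) : Prod.snd '' (ng '' A) = Prod.snd '' A := by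
  rw [Set.image_image]; rfl

lemma mem_corners_ng {c : Pt} {A : Set Pt} : c ∈ corners (ng '' A) ↔ ng c ∈ corners A := by
  unfold corners
  rw [Set.mem_setOf_eq, Set.mem_setOf_eq, fst_image_ng, snd_image_ng, sInf_negIm, sSup_negIm]
  show ((c.1 = -sSup _ ∨ c.1 = -sInf _) ∧ _) ↔ ((-c.1 = sInf _ ∨ -c.1 = sSup _) ∧ _)
  constructor
  · rintro ⟨h1 | h1, h2⟩
    · exact ⟨Or.inr (by rw [h1]; ring), h2⟩
    · exact ⟨Or.inl (by rw [h1]; ring), h2⟩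
  · rintro ⟨h1 | h1, h2⟩
    · exact ⟨Or.inr (by rw [← h1]; ring), h2⟩
    · exact ⟨Or.inl (by rw [← h1]; ring), h2⟩

lemma pierces_ng {X Y : Set Pt} : Pierces (ng '' X) (ng '' Y) ↔ Pierces X Y := by
  unfold Pierces
  rw [fst_image_ng, fst_image_ng, snd_image_ng, snd_image_ng]
  have : ∀ s t : Set ℝ, (fun x : ℝ => -x) '' s ⊆ (fun x : ℝ => -x) '' t ↔ s ⊆ t := by
    intro s t
    rw [Set.image_neg_eq_neg, Set.image_neg_eq_neg]
    exact Set.neg_subset_neg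
  rw [this]

lemma piercingInter_ng {X Y : Set Pt} :
    PiercingInter (ng '' X) (ng '' Y) ↔ PiercingInter X Y := by
  unfold PiercingInter
  rw [pierces_ng, pierces_ng]

lemma cornerInter_ng {P A B' : Set Pt} (h : CornerInter P A B') :
    CornerInter (ng '' P) (ng '' A) (ng '' B') := by
  obtain ⟨⟨c1, hc1, hu1⟩, ⟨c2, hc2, hu2⟩, hno⟩ := h
  refine ⟨⟨ng c1, ⟨mem_corners_ng.2 (by rw [ng_invol]; exact hc1.1),
      mem_ng_image.2 (by rw [ng_invol]; exact hc1.2)⟩, ?_⟩,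
    ⟨ng c2, ⟨mem_corners_ng.2 (by rw [ng_invol]; exact hc2.1),
      mem_ng_image.2 (by rw [ng_invol]; exact hc2.2)⟩, ?_⟩, ?_⟩
  · intro y hy
    have := hu1 (ng y) ⟨mem_corners_ng.1 hy.1, mem_ng_image.1 hy.2⟩
    rw [← this, ng_invol]
  · intro y hy
    have := hu2 (ng y) ⟨mem_corners_ng.1 hy.1, mem_ng_image.1 hy.2⟩
    rw [← this, ng_invol]
  · rintro c (hc | hc) hcP
    · exact hno (ng c) (Or.inl ⟨mem_corners_ng.1 hc.1, mem_ng_image.1 hc.2⟩) (mem_ng_image.1 hcP)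
    · exact hno (ng c) (Or.inr ⟨mem_corners_ng.1 hc.1, mem_ng_image.1 hc.2⟩) (mem_ng_image.1 hcP)

lemma biFam3_iff {R B : Set Pt} {A : Set Pt} :
    A ∈ biFam3 R B ↔ ng '' A ∈ biFam1 (ng '' R) (ng '' B) := by
  constructor
  · rintro ⟨p, hp, q, hq, hE, hI, hbr⟩
    refine ⟨ng p, Set.mem_image_of_mem ng hp, ng q, Set.mem_image_of_mem ng hq, ?_, ?_, ?_⟩
    · rw [hE, D_ng]
    · rw [← Set.image_union, ← Set.image_inter ng_inj, hI, Set.image_pair]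
    · have e : ((min (ng p).1 (ng q).1, min (ng p).2 (ng q).2) : Pt) =
          ng (max p.1 q.1, min p.2 q.2) := by
        show ((min (-p.1) (-q.1), min p.2 q.2) : Pt) = (-(max p.1 q.1), min p.2 q.2)
        rw [min_neg_neg]
      rw [e]
      exact mem_ng_image.2 (by rw [ng_invol]; exact hbr)
  · rintro ⟨P, ⟨p, hp, rfl⟩, Q, ⟨q, hq, rfl⟩, hE, hI, hbl⟩
    refine ⟨p, hp, q, hq, ?_, ?_, ?_⟩
    · exact (Set.image_injective.2 ng_inj) (by rw [← D_ng]; exact hE)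
    · refine (Set.image_injective.2 ng_inj) ?_
      rw [Set.image_inter ng_inj, Set.image_union, Set.image_pair]
      exact hI
    · have e : ((min (ng p).1 (ng q).1, min (ng p).2 (ng q).2) : Pt) =
          ng (max p.1 q.1, min p.2 q.2) := by
        show ((min (-p.1) (-q.1), min p.2 q.2) : Pt) = (-(max p.1 q.1), min p.2 q.2)
        rw [min_neg_neg]
      rw [e] at hbl
      have := mem_ng_image.1 hbl
      rwa [ng_invol] at this

lemma fam3_complete {R B : Set Pt} (hdisj : R ∩ B = ∅) :
    CompleteOn (R ∪ B) (biFam3 R B) := by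
  have hdj : ∀ x : Pt, x ∈ R → x ∈ B → False := by
    intro x h1 h2
    have : x ∈ R ∩ B := ⟨h1, h2⟩
    rw [hdisj] at this; exact this
  have hdisj' : ng '' R ∩ ng '' B = ∅ := by
    rw [← Set.image_inter ng_inj, hdisj, Set.image_empty]
  constructor
  · rintro A ⟨p, hp, q, hq, hE, hI, -⟩
    exact ⟨p, q, Or.inl hp, Or.inr hq, fun h => hdj p hp (h ▸ hq), hE, hI⟩
  · intro a b a' b' ha hb ha' hb' hA hB hCI hPI
    have hmem : ∀ x : Pt, x ∈ R ∪ B → ng x ∈ ng '' R ∪ ng '' B := fun x hx => by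
      rw [← Set.image_union]; exact Set.mem_image_of_mem ng hx
    have hCI' : CornerInter (ng '' R ∪ ng '' B) (D (ng a) (ng b)) (D (ng a') (ng b')) := by
      have := cornerInter_ng hCI
      rw [Set.image_union] at this
      rw [D_ng, D_ng]
      exact this
    have hPI' : PiercingInter (D (ng a) (ng b')) (D (ng a') (ng b)) := by
      rw [D_ng, D_ng]
      exact piercingInter_ng.2 hPI
    obtain ⟨M1, M2⟩ := (fam1_complete hdisj').2 (ng a) (ng b) (ng a') (ng b')
      (hmem a ha) (hmem b hb) (hmem a' ha') (hmem b' hb')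
      (by rw [D_ng]; exact biFam3_iff.1 hA) (by rw [D_ng]; exact biFam3_iff.1 hB)
      hCI' hPI'
    rw [D_ng] at M1 M2
    exact ⟨biFam3_iff.2 M1, biFam3_iff.2 M2⟩


/-- Each of the families `𝓡̄₁, 𝓡̄₂, 𝓡̄₃, 𝓡̄₄` is a complete set
of rectangles on `S = R ∪ B`. -/
theorem stmt12 (R B : Set Pt) (hfin : (R ∪ B).Finite) (hdisj : R ∩ B = ∅) :
    ∀ F ∈ [biFam1 R B, biFam2 R B, biFam3 R B, biFam4 R B],
      CompleteOn (R ∪ B) F := by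
  intro F hF
  have h2 : CompleteOn (R ∪ B) (biFam2 R B) := by
    rw [biFam2_eq, Set.union_comm]
    exact fam1_complete (by rw [Set.inter_comm]; exact hdisj)
  have h4 : CompleteOn (R ∪ B) (biFam4 R B) := by
    rw [biFam4_eq, Set.union_comm]
    exact fam3_complete (by rw [Set.inter_comm]; exact hdisj)
  simp only [List.mem_cons, List.not_mem_nil, or_false] at hF
  rcases hF with rfl | rfl | rfl | rfl
  · exact fam1_complete hdisj
  · exact h2
  · exact fam3_complete hdisj
  · exact h4
end

section
/- Let S = R ∪ B be a two-colored finite point set in ℝ² with R ≠ ∅ and B ≠ ∅. Then there exist a red point r ∈ R and a blue point b ∈ B such that D(r,b) ∩ S = {r,b}; in other words, S always admits at least one bichromatic matching rectangle. -/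
open Set

lemma key1 (a b s : ℝ) (h1 : min a b ≤ s) (h2 : s ≤ max a b) :
    |a - s| ≤ |a - b| ∧ (s ≠ b → |a - s| < |a - b|) := by
  rcases le_total a b with h | h
  · rw [min_eq_left h] at h1; rw [max_eq_right h] at h2
    rw [abs_of_nonpos (by linarith), abs_of_nonpos (by linarith)]
    constructor
    · linarith
    · intro hne
      have : s < b := lt_of_le_of_ne h2 hne
      linarith
  · rw [min_eq_right h] at h1; rw [max_eq_left h] at h2
    rw [abs_of_nonneg (by linarith), abs_of_nonneg (by linarith)]
    constructor
    · linarith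
    · intro hne
      have : b < s := lt_of_le_of_ne h1 (Ne.symm hne)
      linarith

/-- Every two-colored finite point set `S = R ∪ B` with both
colors present admits at least one bichromatic matching rectangle: a red point
`r` and a blue point `b` with `D r b ∩ S = {r, b}`. -/
theorem stmt14 (R B : Set Pt) (hfin : (R ∪ B).Finite) (hdisj : R ∩ B = ∅)
    (hR : R.Nonempty) (hB : B.Nonempty) :
    ∃ r ∈ R, ∃ b ∈ B, D r b ∩ (R ∪ B) = {r, b} := by
  have hTfin : (R ×ˢ B).Finite :=
    Set.Finite.prod (hfin.subset subset_union_left) (hfin.subset subset_union_right)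
  have hTne : (R ×ˢ B).Nonempty := hR.prod hB
  obtain ⟨⟨r, b⟩, hrb, hmin⟩ := Set.exists_min_image (R ×ˢ B)
    (fun p => |p.1.1 - p.2.1| + |p.1.2 - p.2.2|) hTfin hTne
  obtain ⟨hr, hb⟩ := hrb
  refine ⟨r, hr, b, hb, ?_⟩
  apply Set.Subset.antisymm
  · rintro s ⟨hsD, hsS⟩
    obtain ⟨⟨hx1, hx2⟩, hy1, hy2⟩ := hsD
    have Kx := key1 r.1 b.1 s.1 hx1 hx2
    have Ky := key1 r.2 b.2 s.2 hy1 hy2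
    have Kx' := key1 b.1 r.1 s.1 (by rwa [min_comm]) (by rwa [max_comm])
    have Ky' := key1 b.2 r.2 s.2 (by rwa [min_comm]) (by rwa [max_comm])
    by_contra hne
    simp only [Set.mem_insert_iff, Set.mem_singleton_iff, not_or] at hne
    obtain ⟨hsr, hsb⟩ := hne
    have hsr' : s ≠ r := hsr
    have hsb' : s ≠ b := hsb
    cases hsS with
    | inl hsR =>
      -- s is red: (s, b) gives smaller value
      have hle := hmin (s, b) ⟨hsR, hb⟩
      simp only at hle
      -- |s.1-b.1| ≤ ... need strict
      have h1 : |b.1 - s.1| ≤ |b.1 - r.1| := Kx'.1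
      have h2 : |b.2 - s.2| ≤ |b.2 - r.2| := Ky'.1
      have hcoord : s.1 ≠ r.1 ∨ s.2 ≠ r.2 := by
        by_contra hc
        push_neg at hc
        exact hsr' (Prod.ext hc.1 hc.2)
      have hlt : |s.1 - b.1| + |s.2 - b.2| < |r.1 - b.1| + |r.2 - b.2| := by
        rw [abs_sub_comm s.1 b.1, abs_sub_comm s.2 b.2,
            abs_sub_comm r.1 b.1, abs_sub_comm r.2 b.2]
        cases hcoord with
        | inl h => have := Kx'.2 h; linarith
        | inr h => have := Ky'.2 h; linarith
      linarith
    | inr hsB =>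
      have hle := hmin (r, s) ⟨hr, hsB⟩
      simp only at hle
      have h1 : |r.1 - s.1| ≤ |r.1 - b.1| := Kx.1
      have h2 : |r.2 - s.2| ≤ |r.2 - b.2| := Ky.1
      have hcoord : s.1 ≠ b.1 ∨ s.2 ≠ b.2 := by
        by_contra hc
        push_neg at hc
        exact hsb' (Prod.ext hc.1 hc.2)
      have hlt : |r.1 - s.1| + |r.2 - s.2| < |r.1 - b.1| + |r.2 - b.2| := by
        cases hcoord with
        | inl h => have := Kx.2 h; linarith
        | inr h => have := Ky.2 h; linarith
      linarith
  · rintro s (rfl | rfl)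
    · exact ⟨⟨⟨min_le_left _ _, le_max_left _ _⟩, min_le_left _ _, le_max_left _ _⟩,
        Or.inl hr⟩
    · exact ⟨⟨⟨min_le_right _ _, le_max_right _ _⟩, min_le_right _ _, le_max_right _ _⟩,
        Or.inr hb⟩
end

section
/- Let N ∈ ℕ and let P ⊆ {0,1,...,N}² be a set of integer points. Then the map λ : P → ℚ² given by λ(p) = ( x(p) + (x(p)+y(p))/(2N+1), y(p) + (x(p)+y(p))/(2N+1) ) is injective, and the point set λ(P) = {λ(p) : p ∈ P} is in general position. -/
open Set

/-- The perturbation `λ(p) = (x(p) + (x(p)+y(p))/(2N+1), y(p) + (x(p)+y(p))/(2N+1))`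
of an integer point `p`. -/
def lam (N : ℕ) (p : ℤ × ℤ) : ℚ × ℚ :=
  ((p.1 : ℚ) + ((p.1 : ℚ) + (p.2 : ℚ)) / (2 * (N : ℚ) + 1),
   (p.2 : ℚ) + ((p.1 : ℚ) + (p.2 : ℚ)) / (2 * (N : ℚ) + 1))

/-- The grid `{0,1,...,N}²` of integer points. -/
def grid (N : ℕ) : Set (ℤ × ℤ) := Set.Icc (0 : ℤ) (N : ℤ) ×ˢ Set.Icc (0 : ℤ) (N : ℤ)

lemma key_int (N a b c d : ℤ) (hN : 0 ≤ N)
    (ha : 0 ≤ a) (ha' : a ≤ N) (hb : 0 ≤ b) (hb' : b ≤ N)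
    (hc : 0 ≤ c) (hc' : c ≤ N) (hd : 0 ≤ d) (hd' : d ≤ N)
    (h : (2*N+1)*(a-c) = c + d - a - b) : a = c ∧ b = d := by
  have hac : a = c := by
    rcases lt_trichotomy a c with h1 | h1 | h1
    · nlinarith
    · exact h1
    · nlinarith
  refine ⟨hac, ?_⟩
  subst hac
  linarith [h]

lemma first_eq (N : ℕ) {p q : ℤ × ℤ} (hp : p ∈ grid N) (hq : q ∈ grid N)
    (h : (lam N p).1 = (lam N q).1) : p = q := by
  obtain ⟨⟨ha, ha'⟩, ⟨hb, hb'⟩⟩ := hp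
  obtain ⟨⟨hc, hc'⟩, ⟨hd, hd'⟩⟩ := hq
  have hD : (2 * (N : ℚ) + 1) ≠ 0 := by positivity
  simp only [lam] at h
  field_simp at h
  have h' : (2*(N:ℤ)+1)*p.1 + (p.1 + p.2) = (2*(N:ℤ)+1)*q.1 + (q.1 + q.2) := by
    have h2 : (2*(N:ℚ)+1)*(p.1:ℚ) + ((p.1:ℚ) + (p.2:ℚ))
        = (2*(N:ℚ)+1)*(q.1:ℚ) + ((q.1:ℚ) + (q.2:ℚ)) := by linarith
    exact_mod_cast h2
  have heq : (2*(N:ℤ)+1)*(p.1-q.1) = q.1 + q.2 - p.1 - p.2 := by ring_nf; linarith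
  obtain ⟨h1, h2⟩ := key_int N p.1 p.2 q.1 q.2 (Int.ofNat_nonneg N)
    ha ha' hb hb' hc hc' hd hd' heq
  exact Prod.ext h1 h2

lemma second_eq (N : ℕ) {p q : ℤ × ℤ} (hp : p ∈ grid N) (hq : q ∈ grid N)
    (h : (lam N p).2 = (lam N q).2) : p = q := by
  obtain ⟨⟨ha, ha'⟩, ⟨hb, hb'⟩⟩ := hp
  obtain ⟨⟨hc, hc'⟩, ⟨hd, hd'⟩⟩ := hq
  have hD : (2 * (N : ℚ) + 1) ≠ 0 := by positivity
  simp only [lam] at h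
  field_simp at h
  have h' : (2*(N:ℤ)+1)*p.2 + (p.1 + p.2) = (2*(N:ℤ)+1)*q.2 + (q.1 + q.2) := by
    have h2 : (2*(N:ℚ)+1)*(p.2:ℚ) + ((p.1:ℚ) + (p.2:ℚ))
        = (2*(N:ℚ)+1)*(q.2:ℚ) + ((q.1:ℚ) + (q.2:ℚ)) := by linarith
    exact_mod_cast h2
  have heq : (2*(N:ℤ)+1)*(p.2-q.2) = q.1 + q.2 - p.1 - p.2 := by ring_nf; linarith
  obtain ⟨h1, h2⟩ := key_int N p.2 p.1 q.2 q.1 (Int.ofNat_nonneg N)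
    hb hb' ha ha' hd hd' hc hc' (by linarith [heq])
  exact Prod.ext h2 h1

/-- The map `λ` is injective on `P ⊆ {0,…,N}²` and the image
point set `λ(P)` is in general position: no two of its points share the same
x-coordinate or the same y-coordinate. -/
theorem stmt15 (N : ℕ) (P : Set (ℤ × ℤ)) (hP : P ⊆ grid N) :
    Set.InjOn (lam N) P ∧
    ∀ u ∈ lam N '' P, ∀ v ∈ lam N '' P, u ≠ v → u.1 ≠ v.1 ∧ u.2 ≠ v.2 := by
  constructor
  · intro p hp q hq h
    exact first_eq N (hP hp) (hP hq) (by rw [h])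
  · rintro u ⟨p, hp, rfl⟩ v ⟨q, hq, rfl⟩ huv
    constructor
    · intro h; exact huv (by rw [first_eq N (hP hp) (hP hq) h])
    · intro h; exact huv (by rw [second_eq N (hP hp) (hP hq) h])
end

section
/- Let N ∈ ℕ, let P ⊆ {0,1,...,N}² be a set of integer points, and let λ(p) = ( x(p) + (x(p)+y(p))/(2N+1), y(p) + (x(p)+y(p))/(2N+1) ). For every two distinct points a,b ∈ P such that x(a) = x(b) or y(a) = y(b), it holds that D(a,b) ∩ P = {a,b} if and only if D(λ(a),λ(b)) ∩ λ(P) = {λ(a),λ(b)}. -/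
open Set

/-- The minimum enclosing axis-aligned rectangle of two integer points,
as a set of integer points. -/
def Dz (a b : ℤ × ℤ) : Set (ℤ × ℤ) :=
  Set.Icc (min a.1 b.1) (max a.1 b.1) ×ˢ Set.Icc (min a.2 b.2) (max a.2 b.2)

/-- The minimum enclosing axis-aligned rectangle of two rational points. -/
def Dq (a b : ℚ × ℚ) : Set (ℚ × ℚ) :=
  Set.Icc (min a.1 b.1) (max a.1 b.1) ×ˢ Set.Icc (min a.2 b.2) (max a.2 b.2)

lemma core_h (N : ℕ) (x1 x2 y u v : ℤ)
    (hx1 : 0 ≤ x1) (hx2' : x2 ≤ N)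
    (hy : 0 ≤ y) (hy' : y ≤ N) (hu : 0 ≤ u) (hu' : u ≤ N) (hv : 0 ≤ v) (hv' : v ≤ N) :
    (x1 ≤ u ∧ u ≤ x2 ∧ v = y) ↔
      ((x1:ℚ) + (x1+y)/(2*N+1) ≤ u + (u+v)/(2*N+1) ∧
       (u:ℚ) + (u+v)/(2*N+1) ≤ x2 + (x2+y)/(2*N+1) ∧
       (y:ℚ) + (x1+y)/(2*N+1) ≤ v + (u+v)/(2*N+1) ∧
       (v:ℚ) + (u+v)/(2*N+1) ≤ y + (x2+y)/(2*N+1)) := by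
  have hM : (0:ℚ) < 2*N+1 := by positivity
  have key : ∀ c d e f : ℚ, (c + d/(2*N+1) ≤ e + f/(2*N+1)) ↔
      c*(2*N+1) + d ≤ e*(2*N+1) + f := by
    intro c d e f
    rw [show c + d/(2*N+1) = (c*(2*N+1)+d)/(2*N+1) by field_simp,
        show e + f/(2*N+1) = (e*(2*N+1)+f)/(2*N+1) by field_simp]
    exact div_le_div_iff_of_pos_right hM
  simp only [key]
  have bx1 : (0:ℚ) ≤ x1 := by exact_mod_cast hx1
  have bx2' : (x2:ℚ) ≤ N := by exact_mod_cast hx2'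
  have by0 : (0:ℚ) ≤ y := by exact_mod_cast hy
  have by' : (y:ℚ) ≤ N := by exact_mod_cast hy'
  have bu : (0:ℚ) ≤ u := by exact_mod_cast hu
  have bu' : (u:ℚ) ≤ N := by exact_mod_cast hu'
  have bv : (0:ℚ) ≤ v := by exact_mod_cast hv
  have bv' : (v:ℚ) ≤ N := by exact_mod_cast hv'
  constructor
  · rintro ⟨h1, h2, rfl⟩
    have q1 : (x1:ℚ) ≤ u := by exact_mod_cast h1
    have q2 : (u:ℚ) ≤ x2 := by exact_mod_cast h2
    refine ⟨by nlinarith, by nlinarith, by nlinarith, by nlinarith⟩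
  · rintro ⟨h1, h2, h3, h4⟩
    have hvy : v = y := by
      rcases lt_trichotomy v y with h | h | h
      · exfalso
        have : (v:ℚ) ≤ y - 1 := by exact_mod_cast Int.le_sub_one_of_lt h
        nlinarith
      · exact h
      · exfalso
        have : (y:ℚ) ≤ v - 1 := by exact_mod_cast Int.le_sub_one_of_lt h
        nlinarith
    subst hvy
    refine ⟨?_, ?_, rfl⟩
    · have : (x1:ℚ) ≤ u := by nlinarith
      exact_mod_cast this
    · have : (u:ℚ) ≤ x2 := by nlinarith
      exact_mod_cast this

lemma mem_h (N : ℕ) (x1 x2 y u v : ℤ) (hx : x1 ≤ x2)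
    (hx1 : 0 ≤ x1) (hx2' : x2 ≤ N)
    (hy : 0 ≤ y) (hy' : y ≤ N) (hu : 0 ≤ u) (hu' : u ≤ N) (hv : 0 ≤ v) (hv' : v ≤ N) :
    ((u,v) ∈ Dz (x1,y) (x2,y)) ↔ lam N (u,v) ∈ Dq (lam N (x1,y)) (lam N (x2,y)) := by
  have hM : (0:ℚ) < 2*N+1 := by positivity
  have hxq : (x1:ℚ) ≤ x2 := by exact_mod_cast hx
  have l1 : (lam N (x1,y)).1 ≤ (lam N (x2,y)).1 := by
    simp only [lam]
    have := (div_le_div_iff_of_pos_right hM).2 (show (x1:ℚ)+y ≤ x2+y by linarith)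
    linarith
  have l2 : (lam N (x1,y)).2 ≤ (lam N (x2,y)).2 := by
    simp only [lam]
    have := (div_le_div_iff_of_pos_right hM).2 (show (x1:ℚ)+y ≤ x2+y by linarith)
    linarith
  rw [Dz, Dq, Set.mem_prod, Set.mem_prod, Set.mem_Icc, Set.mem_Icc, Set.mem_Icc,
    Set.mem_Icc, min_eq_left l1, max_eq_right l1, min_eq_left l2, max_eq_right l2]
  simp only [min_eq_left hx, max_eq_right hx, min_self, max_self]
  have key := core_h N x1 x2 y u v hx1 hx2' hy hy' hu hu' hv hv'
  simp only [lam]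
  constructor
  · rintro ⟨⟨h1, h2⟩, h3, h4⟩
    obtain ⟨q1, q2, q3, q4⟩ := key.1 ⟨h1, h2, le_antisymm h4 h3⟩
    exact ⟨⟨q1, q2⟩, q3, q4⟩
  · rintro ⟨⟨q1, q2⟩, q3, q4⟩
    obtain ⟨h1, h2, h3⟩ := key.2 ⟨q1, q2, q3, q4⟩
    exact ⟨⟨h1, h2⟩, h3.ge, h3.le⟩

lemma mem_v (N : ℕ) (x y1 y2 u v : ℤ) (hy : y1 ≤ y2)
    (hy1 : 0 ≤ y1) (hy2' : y2 ≤ N)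
    (hx0 : 0 ≤ x) (hx' : x ≤ N) (hu : 0 ≤ u) (hu' : u ≤ N) (hv : 0 ≤ v) (hv' : v ≤ N) :
    ((u,v) ∈ Dz (x,y1) (x,y2)) ↔ lam N (u,v) ∈ Dq (lam N (x,y1)) (lam N (x,y2)) := by
  have hM : (0:ℚ) < 2*N+1 := by positivity
  have hyq : (y1:ℚ) ≤ y2 := by exact_mod_cast hy
  have l1 : (lam N (x,y1)).1 ≤ (lam N (x,y2)).1 := by
    simp only [lam]
    have := (div_le_div_iff_of_pos_right hM).2 (show (x:ℚ)+y1 ≤ x+y2 by linarith)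
    linarith
  have l2 : (lam N (x,y1)).2 ≤ (lam N (x,y2)).2 := by
    simp only [lam]
    have := (div_le_div_iff_of_pos_right hM).2 (show (x:ℚ)+y1 ≤ x+y2 by linarith)
    linarith
  rw [Dz, Dq, Set.mem_prod, Set.mem_prod, Set.mem_Icc, Set.mem_Icc, Set.mem_Icc,
    Set.mem_Icc, min_eq_left l1, max_eq_right l1, min_eq_left l2, max_eq_right l2]
  simp only [min_eq_left hy, max_eq_right hy, min_self, max_self]
  have key := core_h N y1 y2 x v u hy1 hy2' hx0 hx' hv hv' hu hu'
  simp only [lam]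
  constructor
  · rintro ⟨⟨h1, h2⟩, h3, h4⟩
    obtain ⟨q1, q2, q3, q4⟩ := key.1 ⟨h3, h4, le_antisymm h2 h1⟩
    ring_nf at q1 q2 q3 q4 ⊢
    exact ⟨⟨by linarith, by linarith⟩, by linarith, by linarith⟩
  · rintro ⟨⟨q1, q2⟩, q3, q4⟩
    ring_nf at q1 q2 q3 q4 key
    obtain ⟨h1, h2, h3⟩ := key.2 ⟨by linarith, by linarith, by linarith, by linarith⟩
    exact ⟨⟨h3.ge, h3.le⟩, h1, h2⟩

lemma lam_inj (N : ℕ) {p q : ℤ × ℤ} (h : lam N p = lam N q) : p = q := by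
  have hM : (2 * (N:ℚ) + 1) ≠ 0 := by positivity
  have h1 := congrArg Prod.fst h
  have h2 := congrArg Prod.snd h
  simp only [lam] at h1 h2
  field_simp at h1 h2
  have hd : (p.1 : ℚ) - p.2 = q.1 - q.2 :=
    mul_right_cancel₀ hM (by linear_combination h1 - h2)
  have hs : (p.1 : ℚ) + p.2 = q.1 + q.2 :=
    mul_right_cancel₀ (show (2*(N:ℚ)+3) ≠ 0 by positivity) (by linear_combination h1 + h2)
  have e1 : (p.1 : ℚ) = q.1 := by linarith
  have e2 : (p.2 : ℚ) = q.2 := by linarith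
  exact Prod.ext (by exact_mod_cast e1) (by exact_mod_cast e2)

lemma Dz_comm (a b : ℤ × ℤ) : Dz a b = Dz b a := by
  simp [Dz, min_comm, max_comm]

lemma Dq_comm (a b : ℚ × ℚ) : Dq a b = Dq b a := by
  simp [Dq, min_comm, max_comm]

lemma mem_iff (N : ℕ) {a b p : ℤ × ℤ} (ha : a ∈ grid N) (hb : b ∈ grid N)
    (hp : p ∈ grid N) (hal : a.1 = b.1 ∨ a.2 = b.2) :
    p ∈ Dz a b ↔ lam N p ∈ Dq (lam N a) (lam N b) := by
  obtain ⟨a1, a2⟩ := a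
  obtain ⟨b1, b2⟩ := b
  obtain ⟨u, v⟩ := p
  simp only [grid, Set.mem_prod, Set.mem_Icc] at ha hb hp
  obtain ⟨⟨ha1, ha1'⟩, ha2, ha2'⟩ := ha
  obtain ⟨⟨hb1, hb1'⟩, hb2, hb2'⟩ := hb
  obtain ⟨⟨hu, hu'⟩, hv, hv'⟩ := hp
  rcases hal with h | h <;> simp only at h <;> subst h
  · rcases le_total a2 b2 with h | h
    · exact mem_v N a1 a2 b2 u v h ha2 hb2' ha1 ha1' hu hu' hv hv'
    · rw [Dz_comm, Dq_comm]
      exact mem_v N a1 b2 a2 u v h hb2 ha2' ha1 ha1' hu hu' hv hv'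
  · rcases le_total a1 b1 with h | h
    · exact mem_h N a1 b1 a2 u v h ha1 hb1' ha2 ha2' hu hu' hv hv'
    · rw [Dz_comm, Dq_comm]
      exact mem_h N b1 a1 a2 u v h hb1 ha1' ha2 ha2' hu hu' hv hv'

lemma self_mem_Dz_left (a b : ℤ × ℤ) : a ∈ Dz a b := by
  refine ⟨⟨?_, ?_⟩, ?_, ?_⟩ <;> simp

lemma self_mem_Dz_right (a b : ℤ × ℤ) : b ∈ Dz a b := by
  refine ⟨⟨?_, ?_⟩, ?_, ?_⟩ <;> simp

/-- For two distinct horizontally or vertically aligned points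
`a, b ∈ P`, the rectangle (segment) `D a b` contains exactly the points `a, b`
of `P` iff `D (λ a) (λ b)` contains exactly the points `λ a, λ b` of `λ(P)`. -/
theorem stmt16 (N : ℕ) (P : Set (ℤ × ℤ)) (hP : P ⊆ grid N)
    (a b : ℤ × ℤ) (ha : a ∈ P) (hb : b ∈ P) (hab : a ≠ b)
    (haligned : a.1 = b.1 ∨ a.2 = b.2) :
    Dz a b ∩ P = {a, b} ↔
      Dq (lam N a) (lam N b) ∩ (lam N '' P) = {lam N a, lam N b} := by
  have hag : a ∈ grid N := hP ha
  have hbg : b ∈ grid N := hP hb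
  constructor
  · intro h
    apply Set.Subset.antisymm
    · rintro q ⟨hq1, p, hpP, rfl⟩
      have hpD : p ∈ Dz a b := (mem_iff N hag hbg (hP hpP) haligned).2 hq1
      have : p ∈ ({a, b} : Set (ℤ × ℤ)) := h ▸ ⟨hpD, hpP⟩
      rcases this with rfl | rfl
      · exact Set.mem_insert _ _
      · exact Set.mem_insert_of_mem _ rfl
    · rintro q (rfl | rfl)
      · exact ⟨(mem_iff N hag hbg hag haligned).1 (self_mem_Dz_left a b), a, ha, rfl⟩
      · exact ⟨(mem_iff N hag hbg hbg haligned).1 (self_mem_Dz_right a b), b, hb, rfl⟩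
  · intro h
    apply Set.Subset.antisymm
    · rintro p ⟨hpD, hpP⟩
      have : lam N p ∈ ({lam N a, lam N b} : Set (ℚ × ℚ)) :=
        h ▸ ⟨(mem_iff N hag hbg (hP hpP) haligned).1 hpD, p, hpP, rfl⟩
      rcases this with hq | hq
      · exact (lam_inj N hq) ▸ Set.mem_insert _ _
      · exact (lam_inj N hq) ▸ Set.mem_insert_of_mem _ rfl
    · rintro p (rfl | rfl)
      · exact ⟨self_mem_Dz_left _ _, ha⟩
      · exact ⟨self_mem_Dz_right _ _, hb⟩
end
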